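/- arXiv:1011.2251 — 11 statements merged into one kernel-verified Lean document; each statement's English description precedes it below -/
import Mathlib

section
/- For every matrix M in H, the first and third columns of M belong to Γ₁ and the second column of M belongs to Γ₋₂. -/
open Matrix

def Bmat : Matrix (Fin 3) (Fin 3) ℤ := !![3, 4, 0; 2, 3, 0; 0, 0, 1]
def Jmat : Matrix (Fin 3) (Fin 3) ℤ := !![0, 0, 1; 0, 1, 0; 1, 0, 0]

def BGL : GL (Fin 3) ℤ :=
  ⟨Bmat, !![3, -4, 0; -2, 3, 0; 0, 0, 1], by decide, by decide⟩

def JGL : GL (Fin 3) ℤ := ⟨Jmat, Jmat, by decide, by decide⟩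

def H : Subgroup (GL (Fin 3) ℤ) := Subgroup.closure {BGL, JGL}

/-- `Γ a` : integer solutions of `x₁² - 2x₂² + x₃² = a`, as column vectors. -/
def Gamma (a : ℤ) : Set (Fin 3 → ℤ) :=
  {x | x 0 ^ 2 - 2 * x 1 ^ 2 + x 2 ^ 2 = a}

def Qmat : Matrix (Fin 3) (Fin 3) ℤ := !![1, 0, 0; 0, -2, 0; 0, 0, 1]

lemma key (M : GL (Fin 3) ℤ) (hM : M ∈ H) :
    (M : Matrix (Fin 3) (Fin 3) ℤ)ᵀ * Qmat * (M : Matrix (Fin 3) (Fin 3) ℤ) = Qmat := by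
  induction hM using Subgroup.closure_induction with
  | mem x hx =>
    rcases hx with hx | hx <;> subst hx <;> decide
  | one => simp
  | mul a b _ _ ha hb =>
    have : ((a * b : GL (Fin 3) ℤ) : Matrix (Fin 3) (Fin 3) ℤ) =
        (a : Matrix (Fin 3) (Fin 3) ℤ) * (b : Matrix (Fin 3) (Fin 3) ℤ) := rfl
    rw [this, Matrix.transpose_mul]
    calc (b : Matrix (Fin 3) (Fin 3) ℤ)ᵀ * (a : Matrix (Fin 3) (Fin 3) ℤ)ᵀ * Qmat *
          ((a : Matrix (Fin 3) (Fin 3) ℤ) * (b : Matrix (Fin 3) (Fin 3) ℤ))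
        = (b : Matrix (Fin 3) (Fin 3) ℤ)ᵀ *
          ((a : Matrix (Fin 3) (Fin 3) ℤ)ᵀ * Qmat * (a : Matrix (Fin 3) (Fin 3) ℤ)) *
          (b : Matrix (Fin 3) (Fin 3) ℤ) := by noncomm_ring
      _ = Qmat := by rw [ha]; exact hb
  | inv a _ ha =>
    have h1 : ((a⁻¹ : GL (Fin 3) ℤ) : Matrix (Fin 3) (Fin 3) ℤ) *
        (a : Matrix (Fin 3) (Fin 3) ℤ) = 1 := by
      rw [← Matrix.GeneralLinearGroup.coe_mul, inv_mul_cancel]; rfl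
    have h2 : (a : Matrix (Fin 3) (Fin 3) ℤ) *
        ((a⁻¹ : GL (Fin 3) ℤ) : Matrix (Fin 3) (Fin 3) ℤ) = 1 := by
      rw [← Matrix.GeneralLinearGroup.coe_mul, mul_inv_cancel]; rfl
    calc ((a⁻¹ : GL (Fin 3) ℤ) : Matrix (Fin 3) (Fin 3) ℤ)ᵀ * Qmat *
          ((a⁻¹ : GL (Fin 3) ℤ) : Matrix (Fin 3) (Fin 3) ℤ)
        = ((a⁻¹ : GL (Fin 3) ℤ) : Matrix (Fin 3) (Fin 3) ℤ)ᵀ *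
          ((a : Matrix (Fin 3) (Fin 3) ℤ)ᵀ * Qmat * (a : Matrix (Fin 3) (Fin 3) ℤ)) *
          ((a⁻¹ : GL (Fin 3) ℤ) : Matrix (Fin 3) (Fin 3) ℤ) := by rw [ha]
      _ = (((a : Matrix (Fin 3) (Fin 3) ℤ) *
            ((a⁻¹ : GL (Fin 3) ℤ) : Matrix (Fin 3) (Fin 3) ℤ))ᵀ) * Qmat *
          ((a : Matrix (Fin 3) (Fin 3) ℤ) *
            ((a⁻¹ : GL (Fin 3) ℤ) : Matrix (Fin 3) (Fin 3) ℤ)) := by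
            rw [Matrix.transpose_mul]; noncomm_ring
      _ = Qmat := by rw [h2]; simp

/-- The first and third columns of any `M ∈ H` belong to `Γ 1` and its second
column belongs to `Γ (-2)`. -/
theorem columns_in_Gamma (M : GL (Fin 3) ℤ) (hM : M ∈ H) :
    (fun i => (M : Matrix (Fin 3) (Fin 3) ℤ) i 0) ∈ Gamma 1 ∧
    (fun i => (M : Matrix (Fin 3) (Fin 3) ℤ) i 2) ∈ Gamma 1 ∧
    (fun i => (M : Matrix (Fin 3) (Fin 3) ℤ) i 1) ∈ Gamma (-2) := by
  have h := key M hM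
  set A := (M : Matrix (Fin 3) (Fin 3) ℤ) with hA
  have h00 := congrFun (congrFun h 0) 0
  have h22 := congrFun (congrFun h 2) 2
  have h11 := congrFun (congrFun h 1) 1
  simp [Matrix.mul_apply, Fin.sum_univ_three, Qmat, Matrix.transpose_apply] at h00 h22 h11
  refine ⟨?_, ?_, ?_⟩ <;> simp only [Gamma, Set.mem_setOf_eq] <;> ring_nf <;>
    ring_nf at h00 h22 h11 <;> omega
end

section
/- For every nonzero integer a, the set Θ_a is finite. -/
/-- `C = {x ∈ ℤ³ : |x₁| ≤ |x₂| or |x₁| ≥ 2|x₂|}`. -/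
def Cset : Set (Fin 3 → ℤ) := {x | |x 0| ≤ |x 1| ∨ 2 * |x 1| ≤ |x 0|}

def Theta (a : ℤ) : Set (Fin 3 → ℤ) :=
  if a < 0 then {x | x ∈ Gamma a ∧ max |x 0| |x 2| ≤ |x 1|}
  else {x | x ∈ Gamma a ∧ x ∈ Cset ∧ ![x 2, x 1, x 0] ∈ Cset}

lemma int_le_sq (c : ℤ) : c ≤ c ^ 2 := by
  rcases le_or_gt c 0 with h | h
  · nlinarith [sq_nonneg c]
  · nlinarith [h]

lemma theta_bound (a : ℤ) (ha : a ≠ 0) {x : Fin 3 → ℤ} (hx : x ∈ Theta a) (i : Fin 3) :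
    |x i| ≤ 2 * |a| := by
  set b := |x 0| with hb
  set c := |x 1| with hc
  set d := |x 2| with hd
  have b0 : 0 ≤ b := abs_nonneg _
  have c0 : 0 ≤ c := abs_nonneg _
  have d0 : 0 ≤ d := abs_nonneg _
  have key : b ≤ 2 * |a| ∧ c ≤ 2 * |a| ∧ d ≤ 2 * |a| := by
    unfold Theta at hx
    split_ifs at hx with hneg
    · -- a < 0
      obtain ⟨hg, hm⟩ := hx
      have heq : b ^ 2 - 2 * c ^ 2 + d ^ 2 = a := by
        rw [hb, hc, hd, sq_abs, sq_abs, sq_abs]; exact hg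
      have hbc : b ≤ c := le_trans (le_max_left _ _) hm
      have hdc : d ≤ c := le_trans (le_max_right _ _) hm
      have habs : |a| = -a := abs_of_neg hneg
      have hc2a : c ≤ -a := by
        rcases hbc.lt_or_eq with h | h
        · have h1 : b + 1 ≤ c := h
          nlinarith [mul_nonneg (by linarith : (0:ℤ) ≤ c - b - 1) (by linarith : (0:ℤ) ≤ c + b),
            mul_nonneg (by linarith : (0:ℤ) ≤ c - d) (by linarith : (0:ℤ) ≤ c + d)]
        · rcases hdc.lt_or_eq with h2 | h2
          · have h1 : d + 1 ≤ c := h2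
            nlinarith [mul_nonneg (by linarith : (0:ℤ) ≤ c - d - 1) (by linarith : (0:ℤ) ≤ c + d),
              mul_nonneg (by linarith : (0:ℤ) ≤ c - b) (by linarith : (0:ℤ) ≤ c + b)]
          · exfalso; apply ha; rw [← heq, h, h2]; ring
      refine ⟨by linarith, by linarith, by linarith⟩
    · -- a ≥ 0, hence a ≥ 1
      obtain ⟨hg, hC1, hC2⟩ := hx
      have hC2' : d ≤ c ∨ 2 * c ≤ d := by
        simpa [Cset, hb, hc, hd] using hC2
      have hC1' : b ≤ c ∨ 2 * c ≤ b := by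
        simpa [Cset, hb, hc, hd] using hC1
      have heq : b ^ 2 - 2 * c ^ 2 + d ^ 2 = a := by
        rw [hb, hc, hd, sq_abs, sq_abs, sq_abs]; exact hg
      have ha1 : 1 ≤ a := by
        rcases (not_lt.mp hneg).lt_or_eq with h | h
        · exact h
        · exact absurd h.symm ha
      have habs : |a| = a := abs_of_nonneg (by linarith)
      have hbb : b ≤ b ^ 2 := int_le_sq b
      have hcc : c ≤ c ^ 2 := int_le_sq c
      have hdd : d ≤ d ^ 2 := int_le_sq d
      have hb2 : 0 ≤ b ^ 2 := sq_nonneg b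
      have hd2 : 0 ≤ d ^ 2 := sq_nonneg d
      rcases hC1' with h1 | h1 <;> rcases hC2' with h2 | h2
      · exfalso
        have e1 : b ^ 2 ≤ c ^ 2 := pow_le_pow_left₀ b0 h1 2
        have e2 : d ^ 2 ≤ c ^ 2 := pow_le_pow_left₀ d0 h2 2
        linarith
      · -- b ≤ c, 2c ≤ d
        have e1 : b ^ 2 ≤ c ^ 2 := pow_le_pow_left₀ b0 h1 2
        have e2 : (2*c) ^ 2 ≤ d ^ 2 := pow_le_pow_left₀ (by linarith) h2 2
        have e2' : 4 * c ^ 2 ≤ d ^ 2 := by ring_nf at e2 ⊢; linarith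
        have h2c : 2 * c ^ 2 ≤ a := by linarith
        exact ⟨by linarith, by linarith, by linarith⟩
      · -- 2c ≤ b, d ≤ c
        have e1 : (2*c) ^ 2 ≤ b ^ 2 := pow_le_pow_left₀ (by linarith) h1 2
        have e1' : 4 * c ^ 2 ≤ b ^ 2 := by ring_nf at e1 ⊢; linarith
        have e2 : d ^ 2 ≤ c ^ 2 := pow_le_pow_left₀ d0 h2 2
        have h2c : 2 * c ^ 2 ≤ a := by linarith
        exact ⟨by linarith, by linarith, by linarith⟩
      · -- 2c ≤ b, 2c ≤ d
        have e1 : (2*c) ^ 2 ≤ b ^ 2 := pow_le_pow_left₀ (by linarith) h1 2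
        have e1' : 4 * c ^ 2 ≤ b ^ 2 := by ring_nf at e1 ⊢; linarith
        have e2 : (2*c) ^ 2 ≤ d ^ 2 := pow_le_pow_left₀ (by linarith) h2 2
        have e2' : 4 * c ^ 2 ≤ d ^ 2 := by ring_nf at e2 ⊢; linarith
        have h6c : 6 * c ^ 2 ≤ a := by linarith
        exact ⟨by linarith, by linarith, by linarith⟩
  fin_cases i
  · exact key.1
  · exact key.2.1
  · exact key.2.2

/-- For each nonzero integer `a`, the set `Θ a` is finite. -/
theorem theta_finite (a : ℤ) (ha : a ≠ 0) : (Theta a).Finite := by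
  apply Set.Finite.subset
    (Set.Finite.pi (fun i : Fin 3 => Set.finite_Icc (-(2 * |a|)) (2 * |a|)))
  intro x hx
  simp only [Set.mem_pi, Set.mem_univ, Set.mem_Icc, forall_true_left]
  intro i
  exact abs_le.mp (theta_bound a ha hx i)
end

section
/- For every integer a, the H-orbit of Θ_a is all of Γ_a: for every x ∈ Γ_a there exist M ∈ H and θ ∈ Θ_a with x = Mθ. -/
open Matrix

def meas (x : Fin 3 → ℤ) : ℕ := ((x 0)^2 + 2*(x 1)^2 + (x 2)^2).toNat

lemma pell (u v : ℤ) (h1 : |v| < |u|) (h2 : |u| < 2*|v|) :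
    |3*v - 2*u| < |v| ∨ |3*v + 2*u| < |v| := by
  simp only [Int.abs_eq_natAbs] at *
  omega

set_option maxHeartbeats 2000000 in
lemma aux (a : ℤ) : ∀ n (x : Fin 3 → ℤ), meas x = n → x ∈ Gamma a →
    ∃ M ∈ H, ∃ θ ∈ Theta a, x = (M : Matrix (Fin 3) (Fin 3) ℤ).mulVec θ := by
  intro n
  induction n using Nat.strong_induction_on with
  | _ n ih =>
  intro x hm hx
  by_cases hθ : x ∈ Theta a
  · exact ⟨1, one_mem H, x, hθ, by simp⟩
  have hB : BGL ∈ H := Subgroup.subset_closure (by simp)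
  have hJ : JGL ∈ H := Subgroup.subset_closure (by simp)
  have step : ∀ (g : GL (Fin 3) ℤ), g ∈ H → ∀ θ : Fin 3 → ℤ,
      (g : Matrix (Fin 3) (Fin 3) ℤ).mulVec θ = x → θ ∈ Gamma a → meas θ < n →
      ∃ M ∈ H, ∃ θ' ∈ Theta a, x = (M : Matrix (Fin 3) (Fin 3) ℤ).mulVec θ' := by
    intro g hg θ hgθ hΓ hlt
    obtain ⟨M, hM, θ', hθ', hy⟩ := ih (meas θ) hlt θ rfl hΓ
    refine ⟨g * M, mul_mem hg hM, θ', hθ', ?_⟩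
    rw [Units.val_mul, ← Matrix.mulVec_mulVec, ← hy, hgθ]
  set u := x 0 with hu
  set v := x 1 with hv
  set w := x 2 with hw
  have hxeq : u^2 - 2*v^2 + w^2 = a := hx
  -- key disjunction
  have hdisj : (|v| < |u| ∧ |u| < 2*|v|) ∨ (|v| < |w| ∧ |w| < 2*|v|) := by
    by_cases ha : a < 0
    · simp only [Theta, if_pos ha, Set.mem_setOf_eq, not_and] at hθ
      have h2 := hθ hx
      rw [max_le_iff, not_and_or] at h2
      simp only [not_le] at h2
      have hb : ∀ t : ℤ, t^2 < 2*v^2 → |t| < 2*|v| := by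
        intro t ht
        by_contra hc
        push_neg at hc
        nlinarith [sq_abs t, sq_abs v, abs_nonneg t, abs_nonneg v]
      rcases h2 with h | h
      · exact Or.inl ⟨h, hb u (by nlinarith [sq_nonneg w])⟩
      · exact Or.inr ⟨h, hb w (by nlinarith [sq_nonneg u])⟩
    · rw [Theta, if_neg ha] at hθ
      simp only [Set.mem_setOf_eq] at hθ
      have h2 : ¬(x ∈ Cset ∧ ![x 2, x 1, x 0] ∈ Cset) := fun h => hθ ⟨hx, h.1, h.2⟩
      rw [not_and_or] at h2
      rcases h2 with h | h
      · simp only [Cset, Set.mem_setOf_eq, not_or, not_le] at h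
        exact Or.inl ⟨h.1, h.2⟩
      · simp only [Cset, Set.mem_setOf_eq, Matrix.cons_val_zero, Matrix.cons_val_one,
          Matrix.head_cons, not_or, not_le] at h
        exact Or.inr ⟨h.1, h.2⟩
  rcases hdisj with ⟨h1, h2⟩ | ⟨h1, h2⟩
  · rcases pell u v h1 h2 with hp | hp
    · -- θ = B⁻¹ x, M = B
      refine step BGL hB ![3*u - 4*v, 3*v - 2*u, w] ?_ ?_ ?_
      · funext i
        fin_cases i <;>
          simp [BGL, Bmat, Matrix.mulVec, dotProduct, Fin.sum_univ_three] <;> ring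
      · show (3*u-4*v)^2 - 2*(3*v-2*u)^2 + w^2 = a
        linear_combination hxeq
      · have hsq : (3*v-2*u)^2 < v^2 := by
          nlinarith [sq_abs (3*v-2*u), sq_abs v, abs_nonneg (3*v-2*u), abs_nonneg v]
        have hlt : (3*u-4*v)^2 + 2*(3*v-2*u)^2 + w^2 < u^2 + 2*v^2 + w^2 := by nlinarith
        have h0 : 0 ≤ (3*u-4*v)^2 + 2*(3*v-2*u)^2 + w^2 := by positivity
        have : meas ![3*u-4*v, 3*v-2*u, w] = ((3*u-4*v)^2 + 2*(3*v-2*u)^2 + w^2).toNat := rfl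
        rw [this, ← hm]
        show _ < (u^2 + 2*v^2 + w^2).toNat
        omega
    · -- θ = B x, M = B⁻¹
      refine step BGL⁻¹ (inv_mem hB) ![3*u + 4*v, 2*u + 3*v, w] ?_ ?_ ?_
      · have hc : ((BGL⁻¹ : GL (Fin 3) ℤ) : Matrix (Fin 3) (Fin 3) ℤ)
            = !![3, -4, 0; -2, 3, 0; 0, 0, 1] := rfl
        rw [hc]
        funext i
        fin_cases i <;>
          simp [Matrix.mulVec, dotProduct, Fin.sum_univ_three] <;> ring
      · show (3*u+4*v)^2 - 2*(2*u+3*v)^2 + w^2 = a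
        linear_combination hxeq
      · have hsq : (2*u+3*v)^2 < v^2 := by
          nlinarith [sq_abs (3*v+2*u), sq_abs v, abs_nonneg (3*v+2*u), abs_nonneg v]
        have hlt : (3*u+4*v)^2 + 2*(2*u+3*v)^2 + w^2 < u^2 + 2*v^2 + w^2 := by nlinarith
        have h0 : 0 ≤ (3*u+4*v)^2 + 2*(2*u+3*v)^2 + w^2 := by positivity
        have : meas ![3*u+4*v, 2*u+3*v, w] = ((3*u+4*v)^2 + 2*(2*u+3*v)^2 + w^2).toNat := rfl
        rw [this, ← hm]
        show _ < (u^2 + 2*v^2 + w^2).toNat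
        omega
  · rcases pell w v h1 h2 with hp | hp
    · refine step (JGL * BGL) (mul_mem hJ hB) ![3*w - 4*v, 3*v - 2*w, u] ?_ ?_ ?_
      · have hc : ((JGL * BGL : GL (Fin 3) ℤ) : Matrix (Fin 3) (Fin 3) ℤ)
            = Jmat * Bmat := by rw [Units.val_mul]; rfl
        rw [hc, ← Matrix.mulVec_mulVec]
        funext i
        fin_cases i <;>
          simp [Jmat, Bmat, Matrix.mulVec, dotProduct, Fin.sum_univ_three] <;> ring
      · show (3*w-4*v)^2 - 2*(3*v-2*w)^2 + u^2 = a
        linear_combination hxeq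
      · have hsq : (3*v-2*w)^2 < v^2 := by
          nlinarith [sq_abs (3*v-2*w), sq_abs v, abs_nonneg (3*v-2*w), abs_nonneg v]
        have hlt : (3*w-4*v)^2 + 2*(3*v-2*w)^2 + u^2 < u^2 + 2*v^2 + w^2 := by nlinarith
        have h0 : 0 ≤ (3*w-4*v)^2 + 2*(3*v-2*w)^2 + u^2 := by positivity
        have : meas ![3*w-4*v, 3*v-2*w, u] = ((3*w-4*v)^2 + 2*(3*v-2*w)^2 + u^2).toNat := rfl
        rw [this, ← hm]
        show _ < (u^2 + 2*v^2 + w^2).toNat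
        omega
    · refine step (JGL * BGL⁻¹) (mul_mem hJ (inv_mem hB)) ![3*w + 4*v, 2*w + 3*v, u] ?_ ?_ ?_
      · have h1 : ((BGL⁻¹ : GL (Fin 3) ℤ) : Matrix (Fin 3) (Fin 3) ℤ)
            = !![3, -4, 0; -2, 3, 0; 0, 0, 1] := rfl
        have h2 : ((JGL : GL (Fin 3) ℤ) : Matrix (Fin 3) (Fin 3) ℤ) = Jmat := rfl
        have hc : ((JGL * BGL⁻¹ : GL (Fin 3) ℤ) : Matrix (Fin 3) (Fin 3) ℤ)
            = Jmat * !![3, -4, 0; -2, 3, 0; 0, 0, 1] := by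
          rw [Units.val_mul, h1, h2]
        rw [hc, ← Matrix.mulVec_mulVec]
        funext i
        fin_cases i <;>
          simp [Jmat, Matrix.mulVec, dotProduct, Fin.sum_univ_three] <;> ring
      · show (3*w+4*v)^2 - 2*(2*w+3*v)^2 + u^2 = a
        linear_combination hxeq
      · have hsq : (2*w+3*v)^2 < v^2 := by
          nlinarith [sq_abs (3*v+2*w), sq_abs v, abs_nonneg (3*v+2*w), abs_nonneg v]
        have hlt : (3*w+4*v)^2 + 2*(2*w+3*v)^2 + u^2 < u^2 + 2*v^2 + w^2 := by nlinarith
        have h0 : 0 ≤ (3*w+4*v)^2 + 2*(2*w+3*v)^2 + u^2 := by positivity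
        have : meas ![3*w+4*v, 2*w+3*v, u] = ((3*w+4*v)^2 + 2*(2*w+3*v)^2 + u^2).toNat := rfl
        rw [this, ← hm]
        show _ < (u^2 + 2*v^2 + w^2).toNat
        omega

/-- For each integer `a`, the `H`-orbit of `Θ a` is all of `Γ a`. -/
theorem orbit_theta (a : ℤ) (x : Fin 3 → ℤ) (hx : x ∈ Gamma a) :
    ∃ M ∈ H, ∃ θ ∈ Theta a, x = (M : Matrix (Fin 3) (Fin 3) ℤ).mulVec θ := by
  exact aux a (meas x) x rfl hx
end

section
/- The H-orbit of Δ₂ is all of Γ₂: for every (x₁,x₂,x₃) ∈ ℤ³ with x₁² − 2x₂² + x₃² = 2 there exist M ∈ H and δ ∈ Δ₂ with (x₁,x₂,x₃) = Mδ as column vectors. -/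
open Matrix

def Delta2 : Set (Fin 3 → ℤ) :=
  {![2, 1, 0], ![-2, 1, 0], ![1, 0, 1], ![-1, 0, 1], ![-1, 0, -1]}

def InOrbit (x : Fin 3 → ℤ) : Prop :=
  ∃ M ∈ H, ∃ δ ∈ Delta2, x = (M : Matrix (Fin 3) (Fin 3) ℤ) *ᵥ δ

lemma BGL_mem_H : BGL ∈ H := Subgroup.subset_closure (by simp)

lemma JGL_mem_H : JGL ∈ H := Subgroup.subset_closure (by simp)

lemma InOrbit.of_mem_Delta2 {δ : Fin 3 → ℤ} (h : δ ∈ Delta2) : InOrbit δ :=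
  ⟨1, one_mem _, δ, h, by simp⟩

lemma InOrbit.mulVec {g : GL (Fin 3) ℤ} (hg : g ∈ H) {v : Fin 3 → ℤ} (hv : InOrbit v) :
    InOrbit ((g : Matrix (Fin 3) (Fin 3) ℤ) *ᵥ v) := by
  obtain ⟨M, hM, δ, hδ, rfl⟩ := hv
  exact ⟨g * M, mul_mem hg hM, δ, hδ, by rw [Units.val_mul, mulVec_mulVec]⟩

lemma BGL_mulVec (a b c : ℤ) :
    (BGL : Matrix (Fin 3) (Fin 3) ℤ) *ᵥ ![a, b, c] = ![3 * a + 4 * b, 2 * a + 3 * b, c] := by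
  ext i; fin_cases i <;> simp [BGL, Bmat, mulVec, dotProduct, Fin.sum_univ_three]

lemma BGL_inv_mulVec (a b c : ℤ) :
    ((BGL⁻¹ : GL (Fin 3) ℤ) : Matrix (Fin 3) (Fin 3) ℤ) *ᵥ ![a, b, c] =
      ![3 * a - 4 * b, -2 * a + 3 * b, c] := by
  ext i; fin_cases i <;> simp [BGL, mulVec, dotProduct, Fin.sum_univ_three]; ring

lemma JGL_mulVec (a b c : ℤ) :
    (JGL : Matrix (Fin 3) (Fin 3) ℤ) *ᵥ ![a, b, c] = ![c, b, a] := by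
  ext i; fin_cases i <;> simp [JGL, Jmat, mulVec, dotProduct, Fin.sum_univ_three]

section Descent

variable {R : Type*} [CommRing R] [LinearOrder R] [IsStrictOrderedRing R] {a b c : R}

lemma sq_lt_sq_of_quadForm (h : a ^ 2 - 2 * b ^ 2 + c ^ 2 = 2) (hca : c ^ 2 ≤ a ^ 2) :
    b ^ 2 < a ^ 2 := by
  nlinarith

lemma sq_neg_two_mul_add_three_mul_lt_sq (hlo : b ^ 2 < a ^ 2) (hhi : a ^ 2 < 4 * b ^ 2)
    (hab : 0 < a * b) : (-2 * a + 3 * b) ^ 2 < b ^ 2 := by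
  nlinarith

lemma sq_two_mul_add_three_mul_lt_sq (hlo : b ^ 2 < a ^ 2) (hhi : a ^ 2 < 4 * b ^ 2)
    (hab : a * b < 0) : (2 * a + 3 * b) ^ 2 < b ^ 2 := by
  nlinarith

end Descent

lemma sq_lt_four_mul_sq_of_quadForm {a b c : ℤ} (h : a ^ 2 - 2 * b ^ 2 + c ^ 2 = 2) (hb : b ≠ 0)
    (hbc : ¬(b ^ 2 = 1 ∧ c = 0)) : a ^ 2 < 4 * b ^ 2 := by
  have : 0 < b ^ 2 := by positivity
  rcases eq_or_ne c 0 with rfl | hc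
  · have : b ^ 2 ≠ 1 := fun h1 => hbc ⟨h1, rfl⟩
    omega
  · have : 0 < c ^ 2 := by positivity
    omega

lemma eq_one_or_eq_neg_one_of_sq_add_sq_eq_two {a c : ℤ} (h : a ^ 2 + c ^ 2 = 2) :
    (a = 1 ∨ a = -1) ∧ (c = 1 ∨ c = -1) := by
  obtain ⟨ha₁, ha₂⟩ := abs_lt_of_sq_lt_sq' (by nlinarith [sq_nonneg c] : a ^ 2 < 2 ^ 2) two_pos.le
  obtain ⟨hc₁, hc₂⟩ := abs_lt_of_sq_lt_sq' (by nlinarith [sq_nonneg a] : c ^ 2 < 2 ^ 2) two_pos.le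
  interval_cases a <;> interval_cases c <;> simp_all

section InOrbit

variable {a b c : ℤ}

lemma InOrbit.swap (h : InOrbit ![a, b, c]) : InOrbit ![c, b, a] := by
  simpa only [JGL_mulVec] using h.mulVec JGL_mem_H

lemma InOrbit.of_BGL_mulVec (h : InOrbit ![3 * a + 4 * b, 2 * a + 3 * b, c]) :
    InOrbit ![a, b, c] := by
  convert h.mulVec (inv_mem BGL_mem_H) using 1
  rw [BGL_inv_mulVec]
  ring_nf

lemma InOrbit.of_BGL_inv_mulVec (h : InOrbit ![3 * a - 4 * b, -2 * a + 3 * b, c]) :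
    InOrbit ![a, b, c] := by
  convert h.mulVec BGL_mem_H using 1
  rw [BGL_mulVec]
  ring_nf

lemma InOrbit.of_b_eq_zero (h : a ^ 2 + c ^ 2 = 2) : InOrbit ![a, 0, c] := by
  obtain ⟨rfl | rfl, rfl | rfl⟩ := eq_one_or_eq_neg_one_of_sq_add_sq_eq_two h
  · exact .of_mem_Delta2 (by simp [Delta2])
  · exact (InOrbit.of_mem_Delta2 (by simp [Delta2])).swap
  · exact .of_mem_Delta2 (by simp [Delta2])
  · exact .of_mem_Delta2 (by simp [Delta2])

lemma InOrbit.of_c_eq_zero (ha : a ^ 2 = 2 ^ 2) (hb : b ^ 2 = 1 ^ 2) : InOrbit ![a, b, 0] := by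
  obtain rfl | rfl := sq_eq_sq_iff_eq_or_eq_neg.1 ha <;>
    obtain rfl | rfl := sq_eq_sq_iff_eq_or_eq_neg.1 hb
  · exact .of_mem_Delta2 (by simp [Delta2])
  · exact .of_BGL_mulVec (by norm_num; exact .of_mem_Delta2 (by simp [Delta2]))
  · exact .of_mem_Delta2 (by simp [Delta2])
  · exact .of_BGL_inv_mulVec (by norm_num; exact .of_mem_Delta2 (by simp [Delta2]))

lemma InOrbit.of_quadForm_eq_two (h : a ^ 2 - 2 * b ^ 2 + c ^ 2 = 2) :
    InOrbit ![a, b, c] := by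
  induction hn : b.natAbs using Nat.strong_induction_on generalizing a b c with
  | _ n ih =>
  rcases eq_or_ne b 0 with rfl | hb
  · exact .of_b_eq_zero (by linarith)
  wlog hca : c ^ 2 ≤ a ^ 2 generalizing a c
  · exact (this (by linarith) (by linarith)).swap
  have descend {a' b' : ℤ} (hb' : b' ^ 2 < b ^ 2) (h' : a' ^ 2 - 2 * b' ^ 2 + c ^ 2 = 2) :
      InOrbit ![a', b', c] :=
    ih _ (hn ▸ Int.natAbs_lt_iff_sq_lt.2 hb') h' rfl
  by_cases hbc : b ^ 2 = 1 ∧ c = 0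
  · obtain ⟨hb1, rfl⟩ := hbc
    exact .of_c_eq_zero (by linarith) (by linarith)
  have hlo := sq_lt_sq_of_quadForm h hca
  have hhi := sq_lt_four_mul_sq_of_quadForm h hb hbc
  have hab : a * b ≠ 0 := mul_ne_zero (by rintro rfl; nlinarith) hb
  rcases hab.lt_or_gt with hab | hab
  · exact .of_BGL_mulVec
      (descend (sq_two_mul_add_three_mul_lt_sq hlo hhi hab) (by linear_combination h))
  · exact .of_BGL_inv_mulVec
      (descend (sq_neg_two_mul_add_three_mul_lt_sq hlo hhi hab) (by linear_combination h))

end InOrbit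

/-- The `H`-orbit of `Δ₂` is all of `Γ₂`. -/
theorem orbit_delta2 (x : Fin 3 → ℤ) (hx : x 0 ^ 2 - 2 * x 1 ^ 2 + x 2 ^ 2 = 2) :
    ∃ M ∈ H, ∃ δ ∈ Delta2, x = (M : Matrix (Fin 3) (Fin 3) ℤ).mulVec δ := by
  have hx_eta : x = ![x 0, x 1, x 2] := by ext i; fin_cases i <;> rfl
  exact hx_eta ▸ InOrbit.of_quadForm_eq_two hx
end

section
/- The group homomorphism from the free product ℤ ∗ (ℤ/2ℤ) to GL₃(ℤ) sending the generator of the factor ℤ to B and the generator of the factor ℤ/2ℤ to J is injective with image H; in particular, H has presentation ⟨x, y ∣ y²⟩ and is isomorphic to the free product ℤ ∗ ℤ/2ℤ. -/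
/-!
Ping-pong on the integer points `v` of the cone `v₀² + v₂² = 2 v₁²` with `v₁ > 0`. On the
`(v₀, v₁)`-plane `B` is a hyperbolic rotation: every nonzero power of `B` sends the points with
`|v₀| < v₁` to points with `|v₀| > v₁`, and `J`, which swaps `v₀` and `v₂`, sends the latter back to
the former because `v₂² = 2 v₁² - v₀²`. As `ℤ` has at least three elements, the ping-pong lemma makes
`ℤ ∗ ℤ/2ℤ → GL₃(ℤ)` injective.
-/

open Matrix

open Set Cardinal

universe u

/- Mathlib's ping-pong lemma is stated for `CoprodI`; `G₁ ∗ G₂` embeds into the coproduct of the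
`Bool`-indexed family `false ↦ G₁, true ↦ G₂`. -/
namespace Monoid.Coprod

variable {G₁ G₂ : Type u} [Group G₁] [Group G₂]

instance boolFamilyGroup : ∀ b, Group (cond b G₂ G₁)
  | false => ‹Group G₁›
  | true => ‹Group G₂›

def toCoprodI : G₁ ∗ G₂ →* CoprodI (fun b => cond b G₂ G₁) :=
  lift (CoprodI.of (M := fun b => cond b G₂ G₁) (i := false))
    (CoprodI.of (M := fun b => cond b G₂ G₁) (i := true))

def ofCoprodI : CoprodI (fun b => cond b G₂ G₁) →* G₁ ∗ G₂ :=
  CoprodI.lift fun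
    | false => inl
    | true => inr

theorem ofCoprodI_comp_toCoprodI :
    (ofCoprodI : _ →* G₁ ∗ G₂).comp toCoprodI = .id _ := by
  apply hom_ext <;> ext <;> simp [toCoprodI, ofCoprodI]

theorem toCoprodI_injective : Function.Injective (toCoprodI : G₁ ∗ G₂ →* _) :=
  Function.LeftInverse.injective (g := ofCoprodI) (DFunLike.congr_fun ofCoprodI_comp_toCoprodI)

theorem lift_injective_of_ping_pong {G : Type*} [Group G] (f₁ : G₁ →* G) (f₂ : G₂ →* G)
    (hcard : 3 ≤ #G₁ ∨ 3 ≤ #G₂) {α : Type*} [MulAction G α] (X₁ X₂ : Set α)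
    (hX₁ : X₁.Nonempty) (hX₂ : X₂.Nonempty) (hdisj : Disjoint X₁ X₂)
    (hpp₁ : ∀ g ≠ 1, MapsTo (f₁ g • ·) X₂ X₁) (hpp₂ : ∀ g ≠ 1, MapsTo (f₂ g • ·) X₁ X₂) :
    Function.Injective (lift f₁ f₂) := by
  let f : ∀ b, cond b G₂ G₁ →* G
    | false => f₁
    | true => f₂
  have hlift : lift f₁ f₂ = (CoprodI.lift f).comp toCoprodI := by
    apply hom_ext <;> ext <;> simp [toCoprodI, f]
  rw [hlift]
  refine (CoprodI.lift_injective_of_ping_pong f ?_ (fun b => cond b X₂ X₁) ?_ ?_ ?_).comp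
    toCoprodI_injective
  · exact Or.inr (hcard.elim (fun h => ⟨false, h⟩) (fun h => ⟨true, h⟩))
  · rintro (_ | _) <;> assumption
  · rintro (_ | _) (_ | _) h <;> first | exact absurd rfl h | exact hdisj | exact hdisj.symm
  · rintro (_ | _) (_ | _) h g hg <;> rw [smul_set_subset_iff] <;>
      first | exact absurd rfl h | exact hpp₁ g hg | exact hpp₂ g hg

end Monoid.Coprod

def zmodPowersHom {G : Type*} [Monoid G] (n : ℕ) [NeZero n] {g : G} (hg : g ^ n = 1) :
    Multiplicative (ZMod n) →* G where
  toFun a := g ^ a.toAdd.val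
  map_one' := by simp
  map_mul' a b := by simp only [toAdd_mul, ZMod.val_add, ← pow_eq_pow_mod _ hg, pow_add]

theorem zmodPowersHom_ofAdd_one {G : Type*} [Monoid G] (n : ℕ) [NeZero n] {g : G}
    (hg : g ^ n = 1) : zmodPowersHom n hg (Multiplicative.ofAdd 1) = g := by
  change g ^ (1 : ZMod n).val = g
  rw [ZMod.val_one_eq_one_mod, ← pow_eq_pow_mod _ hg, pow_one]

theorem range_zmodPowersHom {G : Type*} [Group G] (n : ℕ) [NeZero n] {g : G}
    (hg : g ^ n = 1) : (zmodPowersHom n hg).range = Subgroup.zpowers g := by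
  apply le_antisymm
  · rintro _ ⟨a, rfl⟩
    exact Subgroup.pow_mem _ (Subgroup.mem_zpowers g) _
  · exact Subgroup.zpowers_le.mpr ⟨_, zmodPowersHom_ofAdd_one n hg⟩

theorem Set.MapsTo.pow_succ_smul {M α : Type*} [Monoid M] [MulAction M α] {g : M}
    {U T : Set α} (hg : MapsTo (g • ·) U T) (hTU : T ⊆ U) (n : ℕ) :
    MapsTo ((g ^ (n + 1)) • ·) U T := by
  induction n with
  | zero => simpa using hg
  | succ n ih =>
    intro v hv
    show g ^ (n + 1 + 1) • v ∈ T
    rw [pow_succ', mul_smul]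
    exact hg (hTU (ih hv))

theorem BGL_smul (v : Fin 3 → ℤ) :
    BGL • v = ![3 * v 0 + 4 * v 1, 2 * v 0 + 3 * v 1, v 2] := by
  ext i
  fin_cases i <;>
    simp [Units.smul_def, smul_eq_mulVec, BGL, Bmat, mulVec, dotProduct, Fin.sum_univ_three]

theorem BGL_inv_smul (v : Fin 3 → ℤ) :
    BGL⁻¹ • v = ![3 * v 0 - 4 * v 1, -2 * v 0 + 3 * v 1, v 2] := by
  ext i
  fin_cases i <;> simp [Units.smul_def, smul_eq_mulVec, BGL, mulVec, dotProduct, Fin.sum_univ_three]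
  ring

theorem JGL_smul (v : Fin 3 → ℤ) : JGL • v = ![v 2, v 1, v 0] := by
  ext i
  fin_cases i <;>
    simp [Units.smul_def, smul_eq_mulVec, JGL, Jmat, mulVec, dotProduct, Fin.sum_univ_three]

/- `B` preserves `x² - 2y²` and fixes `z`, `J` swaps `x` and `z`: both preserve this cone. -/
def lightCone : Set (Fin 3 → ℤ) := {v | v 0 ^ 2 + v 2 ^ 2 = 2 * v 1 ^ 2}

def pingPongSetB : Set (Fin 3 → ℤ) := {v ∈ lightCone | 0 < v 1 ∧ v 1 < |v 0|}

def pingPongSetJ : Set (Fin 3 → ℤ) := {v ∈ lightCone | 0 < v 1 ∧ |v 0| < v 1}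

theorem mapsTo_BGL_smul :
    MapsTo (BGL • ·) {v ∈ lightCone | 0 < v 1 ∧ -v 1 < v 0}
      {v ∈ lightCone | 0 < v 1 ∧ v 1 < v 0} := by
  rintro v ⟨hv, h1, h0⟩
  simp only [lightCone, mem_ofPred_eq] at hv ⊢
  simp only [BGL_smul, cons_val_zero, cons_val_one, cons_val_two, head_cons, tail_cons]
  refine ⟨by linear_combination hv, by linarith, by linarith⟩

theorem mapsTo_BGL_inv_smul :
    MapsTo (BGL⁻¹ • ·) {v ∈ lightCone | 0 < v 1 ∧ v 0 < v 1}
      {v ∈ lightCone | 0 < v 1 ∧ v 0 < -v 1} := by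
  rintro v ⟨hv, h1, h0⟩
  simp only [lightCone, mem_ofPred_eq] at hv ⊢
  simp only [BGL_inv_smul, cons_val_zero, cons_val_one, cons_val_two, head_cons, tail_cons]
  refine ⟨by linear_combination hv, by linarith, by linarith⟩

theorem mapsTo_BGL_zpow_smul {n : ℤ} (hn : n ≠ 0) :
    MapsTo (BGL ^ n • ·) pingPongSetJ pingPongSetB := by
  obtain ⟨k, rfl | rfl⟩ := Int.eq_nat_or_neg n <;>
    obtain ⟨k, rfl⟩ := Nat.exists_eq_succ_of_ne_zero (by omega : k ≠ 0)
  · rw [zpow_natCast]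
    refine (mapsTo_BGL_smul.pow_succ_smul ?_ k).mono ?_ ?_
    · exact fun v ⟨hv, h1, h0⟩ => ⟨hv, h1, by linarith⟩
    · exact fun v ⟨hv, h1, h0⟩ => ⟨hv, h1, (abs_lt.mp h0).1⟩
    · exact fun v ⟨hv, h1, h0⟩ => ⟨hv, h1, by linarith [le_abs_self (v 0)]⟩
  · rw [_root_.zpow_neg, zpow_natCast, ← inv_pow]
    refine (mapsTo_BGL_inv_smul.pow_succ_smul ?_ k).mono ?_ ?_
    · exact fun v ⟨hv, h1, h0⟩ => ⟨hv, h1, by linarith⟩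
    · exact fun v ⟨hv, h1, h0⟩ => ⟨hv, h1, (abs_lt.mp h0).2⟩
    · exact fun v ⟨hv, h1, h0⟩ => ⟨hv, h1, by linarith [neg_abs_le (v 0)]⟩

theorem mapsTo_JGL_smul : MapsTo (JGL • ·) pingPongSetB pingPongSetJ := by
  rintro v ⟨hv, h1, h0⟩
  simp only [lightCone, mem_ofPred_eq] at hv
  simp only [pingPongSetJ, lightCone, mem_ofPred_eq, JGL_smul, cons_val_zero, cons_val_one,
    cons_val_two, head_cons, tail_cons]
  have h01 : v 1 ^ 2 < v 0 ^ 2 := sq_lt_sq.mpr (by rwa [abs_of_pos h1])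
  exact ⟨by linear_combination hv, h1, abs_lt_of_sq_lt_sq (by linarith) h1.le⟩

theorem pingPongSetB_nonempty : pingPongSetB.Nonempty :=
  ⟨![7, 5, 1], by norm_num [pingPongSetB, lightCone, cons_val_two, tail_cons]⟩

theorem pingPongSetJ_nonempty : pingPongSetJ.Nonempty :=
  ⟨![1, 5, 7], by norm_num [pingPongSetJ, lightCone, cons_val_two, tail_cons]⟩

theorem disjoint_pingPongSetB_pingPongSetJ : Disjoint pingPongSetB pingPongSetJ :=
  disjoint_left.mpr fun _ ⟨_, _, hB⟩ ⟨_, _, hJ⟩ => lt_asymm hB hJ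

/-- The homomorphism `ℤ ∗ ℤ/2ℤ →* GL₃(ℤ)` sending the generator of `ℤ` to `B`
and the generator of `ℤ/2ℤ` to `J` is injective with image `H`; in particular
`H` has presentation `⟨x, y ∣ y²⟩` and is isomorphic to `ℤ ∗ ℤ/2ℤ`. -/
theorem H_presentation :
    ∃ φ : Monoid.Coprod (Multiplicative ℤ) (Multiplicative (ZMod 2)) →* GL (Fin 3) ℤ,
      φ (Monoid.Coprod.inl (Multiplicative.ofAdd (1 : ℤ))) = BGL ∧
      φ (Monoid.Coprod.inr (Multiplicative.ofAdd (1 : ZMod 2))) = JGL ∧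
      Function.Injective φ ∧ φ.range = H := by
  have hJ : JGL ^ 2 = 1 := Units.ext (by decide)
  refine ⟨Monoid.Coprod.lift (zpowersHom _ BGL) (zmodPowersHom 2 hJ), by simp,
    by simp [zmodPowersHom_ofAdd_one], ?_, ?_⟩
  · refine Monoid.Coprod.lift_injective_of_ping_pong _ _ ?_ _ _ pingPongSetB_nonempty
      pingPongSetJ_nonempty disjoint_pingPongSetB_pingPongSetJ ?_ ?_
    · exact Or.inl ((Cardinal.natCast_lt_aleph0 (n := 3)).le.trans (Cardinal.aleph0_le_mk _))
    · intro g hg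
      exact mapsTo_BGL_zpow_smul (by simpa using hg)
    · intro g hg
      obtain rfl : g = Multiplicative.ofAdd 1 := by revert g; decide
      simpa [zmodPowersHom_ofAdd_one] using mapsTo_JGL_smul
  · rw [Monoid.Coprod.range_lift, Subgroup.range_zpowersHom, range_zmodPowersHom, H,
      insert_eq, Subgroup.closure_union, Subgroup.zpowers_eq_closure, Subgroup.zpowers_eq_closure]
end

section
/- For every Büchi sequence (x₁,x₂,x₃) of length 3 over ℤ there exist M ∈ H and a unique δ ∈ Δ₂ such that (x₁,x₂,x₃) = Mδ as column vectors. Moreover, if δ ∉ {(1,0,1),(−1,0,−1)} then M is unique with this property, and if δ ∈ {(1,0,1),(−1,0,−1)} then there are exactly two such matrices, namely M and MJ. -/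
open Matrix

/-!
`H` preserves the form `Q x = x₀² - 2x₁² + x₂²`: `B` acts on `(x₀, x₁)` as multiplication by
the unit `3 + 2√2` of `ℤ[√2]`, and `J` swaps `x₀` and `x₂`.

Existence is a descent on `|x₁|`. After swapping `x₀` and `x₂` by `J` so that `x₂² ≤ x₀²`, the
equation `Q x = 2` with `|x₁| ≥ 2` forces `|x₁| < |x₀| < 2|x₁|`, so `B` or `B⁻¹` (depending on
the sign of `x₀x₁`) replaces `x₁` by `3x₁ ± 2x₀`, which is smaller in absolute value. The few
solutions with `|x₁| ≤ 1` are translates of elements of `Δ₂`.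

Uniqueness uses two invariants of `H`: the polar form of `Q`, and the orbits of `H` on
`(ℤ/8)³`. The five elements of `Δ₂` lie in different orbits mod 8. If `N ∈ H` fixes `δ ∈ Δ₂`,
then `Q` and the pairing with `δ` leave at most two candidates for each column of `N`, and the
mod 8 orbits of the standard basis vectors rule out all but one. The exception is
`δ = ±(1,0,1)`, where `N = J` also survives.
-/

def preserving {n R α : Type*} [Fintype n] [DecidableEq n] [Semiring R] (f : (n → R) → α) :
    Subgroup (GL n R) where
  carrier := {g | ∀ v, f ((g : Matrix n n R) *ᵥ v) = f v}
  mul_mem' {g h} hg hh v := by rw [Units.val_mul, ← mulVec_mulVec, hg, hh]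
  one_mem' v := by simp
  inv_mem' {g} hg v := by rw [← hg, mulVec_mulVec, Units.mul_inv, one_mulVec]

lemma H_le_preserving {α : Type*} {f : (Fin 3 → ℤ) → α}
    (hB : ∀ v, f (Bmat *ᵥ v) = f v) (hJ : ∀ v, f (Jmat *ᵥ v) = f v) : H ≤ preserving f :=
  (Subgroup.closure_le _).2 <| Set.insert_subset_iff.2 ⟨hB, Set.singleton_subset_iff.2 hJ⟩

@[simp] lemma coe_BGL : (BGL : Matrix (Fin 3) (Fin 3) ℤ) = Bmat := rfl

@[simp] lemma coe_JGL : (JGL : Matrix (Fin 3) (Fin 3) ℤ) = Jmat := rfl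

lemma eta_fin_three_vec {α : Type*} (x : Fin 3 → α) : x = ![x 0, x 1, x 2] := by
  ext i; fin_cases i <;> rfl

def Q (v : Fin 3 → ℤ) : ℤ := v 0 ^ 2 - 2 * v 1 ^ 2 + v 2 ^ 2

def polarQ (u v : Fin 3 → ℤ) : ℤ := u 0 * v 0 - 2 * (u 1 * v 1) + u 2 * v 2

lemma Q_vec3 (a b c : ℤ) : Q ![a, b, c] = a ^ 2 - 2 * b ^ 2 + c ^ 2 := rfl

lemma polarQ_vec3 (a b c d e f : ℤ) :
    polarQ ![a, b, c] ![d, e, f] = a * d - 2 * (b * e) + c * f := rfl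

lemma Bmat_mulVec (v : Fin 3 → ℤ) : Bmat *ᵥ v = ![3 * v 0 + 4 * v 1, 2 * v 0 + 3 * v 1, v 2] := by
  ext i; fin_cases i <;> simp [Bmat, mulVec, dotProduct, Fin.sum_univ_three]

lemma Binv_mulVec (v : Fin 3 → ℤ) :
    (↑BGL⁻¹ : Matrix (Fin 3) (Fin 3) ℤ) *ᵥ v = ![3 * v 0 - 4 * v 1, 3 * v 1 - 2 * v 0, v 2] := by
  ext i; fin_cases i <;>
    simp [BGL, mulVec, dotProduct, Fin.sum_univ_three, sub_eq_add_neg, add_comm]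

lemma Jmat_mulVec (v : Fin 3 → ℤ) : Jmat *ᵥ v = ![v 2, v 1, v 0] := by
  ext i; fin_cases i <;> simp [Jmat, mulVec, dotProduct, Fin.sum_univ_three]

lemma Q_mulVec {N : GL (Fin 3) ℤ} (hN : N ∈ H) (v : Fin 3 → ℤ) : Q (N *ᵥ v) = Q v :=
  H_le_preserving (f := Q) (fun v => by rw [Bmat_mulVec, Q_vec3, Q]; ring)
    (fun v => by rw [Jmat_mulVec, Q_vec3, Q]; ring) hN v

lemma two_mul_polarQ (u v : Fin 3 → ℤ) : 2 * polarQ u v = Q (u + v) - Q u - Q v := by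
  simp only [polarQ, Q, Pi.add_apply]; ring

lemma polarQ_mulVec {N : GL (Fin 3) ℤ} (hN : N ∈ H) (u v : Fin 3 → ℤ) :
    polarQ (N *ᵥ u) (N *ᵥ v) = polarQ u v := by
  have h := two_mul_polarQ (N *ᵥ u) (N *ᵥ v)
  rw [← mulVec_add, Q_mulVec hN, Q_mulVec hN, Q_mulVec hN, ← two_mul_polarQ] at h
  omega

def red8 (v : Fin 3 → ℤ) : Fin 3 → ZMod 8 := Int.castRingHom (ZMod 8) ∘ v

lemma red8_mulVec (A : Matrix (Fin 3) (Fin 3) ℤ) (v : Fin 3 → ℤ) :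
    red8 (A *ᵥ v) = A.map (Int.castRingHom (ZMod 8)) *ᵥ red8 v :=
  funext (RingHom.map_mulVec _ A v)

def Bbar : Matrix (Fin 3) (Fin 3) (ZMod 8) := Bmat.map (Int.castRingHom (ZMod 8))

def Bbarinv : Matrix (Fin 3) (Fin 3) (ZMod 8) :=
  (↑BGL⁻¹ : Matrix (Fin 3) (Fin 3) ℤ).map (Int.castRingHom (ZMod 8))

def Jbar : Matrix (Fin 3) (Fin 3) (ZMod 8) := Jmat.map (Int.castRingHom (ZMod 8))

def saturate8 (S : Finset (Fin 3 → ZMod 8)) : Finset (Fin 3 → ZMod 8) :=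
  S ∪ S.image (Bbar *ᵥ ·) ∪ S.image (Bbarinv *ᵥ ·) ∪ S.image (Jbar *ᵥ ·)

/-- Four rounds of saturation starting from `w`. This is the whole `H`-orbit of `w` only when
`saturate8 (orbit8 w) = orbit8 w`, which the lemmas below take as a hypothesis. -/
def orbit8 (w : Fin 3 → ZMod 8) : Finset (Fin 3 → ZMod 8) := saturate8^[4] {w}

lemma mem_orbit8_self (w : Fin 3 → ZMod 8) : w ∈ orbit8 w := by
  suffices ∀ k, w ∈ saturate8^[k] {w} from this 4
  intro k
  induction k with
  | zero => exact Finset.mem_singleton_self w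
  | succ k ih =>
    rw [Function.iterate_succ_apply']
    exact Finset.mem_union_left _ (Finset.mem_union_left _ (Finset.mem_union_left _ ih))

lemma mulVec_mem_iff {n R : Type*} [Fintype n] [DecidableEq n] [Semiring R] {S : Set (n → R)}
    {A A' : Matrix n n R} (hA'A : A' * A = 1) (hA : ∀ u ∈ S, A *ᵥ u ∈ S)
    (hA' : ∀ u ∈ S, A' *ᵥ u ∈ S) (u : n → R) : A *ᵥ u ∈ S ↔ u ∈ S :=
  ⟨fun h => by simpa [mulVec_mulVec, hA'A] using hA' _ h, hA u⟩

lemma H_le_preserving_red8_mem {S : Finset (Fin 3 → ZMod 8)} (hS : saturate8 S = S) :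
    H ≤ preserving (fun v => red8 v ∈ S) := by
  have hB : ∀ u ∈ S, Bbar *ᵥ u ∈ S := fun u hu => hS ▸ Finset.mem_union_left _
    (Finset.mem_union_left _ (Finset.mem_union_right _ (Finset.mem_image_of_mem _ hu)))
  have hBinv : ∀ u ∈ S, Bbarinv *ᵥ u ∈ S := fun u hu => hS ▸ Finset.mem_union_left _
    (Finset.mem_union_right _ (Finset.mem_image_of_mem _ hu))
  have hJ : ∀ u ∈ S, Jbar *ᵥ u ∈ S := fun u hu => hS ▸ Finset.mem_union_right _
    (Finset.mem_image_of_mem _ hu)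
  have hBinvB : Bbarinv * Bbar = 1 := by
    rw [Bbarinv, Bbar, ← Matrix.map_mul,
      show (↑BGL⁻¹ * Bmat : Matrix (Fin 3) (Fin 3) ℤ) = 1 from BGL.inv_mul,
      Matrix.map_one _ (map_zero _) (map_one _)]
  have hJJ : Jbar * Jbar = 1 := by
    rw [Jbar, ← Matrix.map_mul, show Jmat * Jmat = 1 from JGL.mul_inv,
      Matrix.map_one _ (map_zero _) (map_one _)]
  refine H_le_preserving (fun v => propext ?_) (fun v => propext ?_) <;> rw [red8_mulVec]
  · exact mulVec_mem_iff (S := ↑S) hBinvB hB hBinv _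
  · exact mulVec_mem_iff (S := ↑S) hJJ hJ hJ _

lemma red8_mulVec_mem_orbit8 {N : GL (Fin 3) ℤ} (hN : N ∈ H) {v : Fin 3 → ℤ}
    (hv : saturate8 (orbit8 (red8 v)) = orbit8 (red8 v)) :
    red8 (N *ᵥ v) ∈ orbit8 (red8 v) := by
  have h : (red8 (N *ᵥ v) ∈ orbit8 (red8 v)) = (red8 v ∈ orbit8 (red8 v)) :=
    H_le_preserving_red8_mem hv hN v
  exact h ▸ mem_orbit8_self _

def HDelta2 : Set (Fin 3 → ℤ) := {x | ∃ M ∈ H, ∃ δ ∈ Delta2, x = (M : Matrix (Fin 3) (Fin 3) ℤ) *ᵥ δ}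

lemma mulVec_mem_HDelta2 {N : GL (Fin 3) ℤ} (hN : N ∈ H) {x : Fin 3 → ℤ} (hx : x ∈ HDelta2) :
    (N : Matrix (Fin 3) (Fin 3) ℤ) *ᵥ x ∈ HDelta2 := by
  obtain ⟨M, hM, δ, hδ, rfl⟩ := hx
  exact ⟨N * M, mul_mem hN hM, δ, hδ, by rw [mulVec_mulVec, Units.val_mul]⟩

lemma mem_HDelta2_of_mulVec_mem {N : GL (Fin 3) ℤ} (hN : N ∈ H) {x : Fin 3 → ℤ}
    (hx : (N : Matrix (Fin 3) (Fin 3) ℤ) *ᵥ x ∈ HDelta2) : x ∈ HDelta2 := by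
  simpa [mulVec_mulVec, ← Units.val_mul] using mulVec_mem_HDelta2 (inv_mem hN) hx

lemma mem_HDelta2_of_mem_Delta2 {δ : Fin 3 → ℤ} (hδ : δ ∈ Delta2) : δ ∈ HDelta2 :=
  ⟨1, one_mem H, δ, hδ, by simp⟩

lemma mem_HDelta2_of_natAbs_le_one {x : Fin 3 → ℤ} (hq : Q x = 2) (h1 : (x 1).natAbs ≤ 1) :
    x ∈ HDelta2 := by
  wlog h20 : x 2 ^ 2 ≤ x 0 ^ 2 generalizing x
  · have hJx := Jmat_mulVec x
    refine mem_HDelta2_of_mulVec_mem JGL_mem_H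
      (this ((Q_mulVec JGL_mem_H x).trans hq) ?_ ?_) <;> rw [coe_JGL, hJx]
    exacts [h1, (not_le.mp h20).le]
  obtain ⟨a, b, c, rfl⟩ : ∃ a b c : ℤ, x = ![a, b, c] := ⟨_, _, _, eta_fin_three_vec x⟩
  simp only [Q_vec3, Matrix.cons_val] at hq h1 h20
  obtain ⟨hb1, hb2⟩ : -1 ≤ b ∧ b ≤ 1 := by omega
  obtain ⟨ha1, ha2⟩ : -2 ≤ a ∧ a ≤ 2 := by constructor <;> nlinarith
  obtain ⟨hc1, hc2⟩ : -1 ≤ c ∧ c ≤ 1 := by constructor <;> nlinarith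
  interval_cases a <;> interval_cases b <;> interval_cases c
  all_goals try (norm_num at hq; done)
  all_goals try (apply mem_HDelta2_of_mem_Delta2; simp [Delta2]; done)
  · exact ⟨BGL, BGL_mem_H, ![-2, 1, 0], by simp [Delta2], by decide⟩
  · exact ⟨JGL, JGL_mem_H, ![-1, 0, 1], by simp [Delta2], by decide⟩
  · exact ⟨BGL⁻¹, inv_mem BGL_mem_H, ![2, 1, 0], by simp [Delta2], by decide⟩

lemma sq_three_mul_sub_two_mul_lt {a b c : ℤ} (hq : a ^ 2 - 2 * b ^ 2 + c ^ 2 = 2)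
    (hb : 4 ≤ b ^ 2) (hca : c ^ 2 ≤ a ^ 2) (hab : 0 ≤ a * b) : (3 * b - 2 * a) ^ 2 < b ^ 2 := by
  have hlo : b ^ 2 < a ^ 2 := by nlinarith
  have hhi : a ^ 2 < 4 * b ^ 2 := by nlinarith
  nlinarith

lemma exists_natAbs_mulVec_lt {x : Fin 3 → ℤ} (hq : Q x = 2) (hx1 : 2 ≤ (x 1).natAbs) :
    ∃ N ∈ H, (((N : Matrix (Fin 3) (Fin 3) ℤ) *ᵥ x) 1).natAbs < (x 1).natAbs := by
  wlog h20 : x 2 ^ 2 ≤ x 0 ^ 2 generalizing x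
  · have hJx := Jmat_mulVec x
    obtain ⟨N, hN, hlt⟩ := this (x := Jmat *ᵥ x) (by rwa [← coe_JGL, Q_mulVec JGL_mem_H])
      (by rwa [hJx]) (by rw [hJx]; exact (not_le.mp h20).le)
    refine ⟨N * JGL, mul_mem hN JGL_mem_H, ?_⟩
    rw [Units.val_mul, ← mulVec_mulVec, coe_JGL]
    simpa [hJx] using hlt
  have hb : 4 ≤ x 1 ^ 2 := by
    rw [← Int.natAbs_sq]; norm_cast; nlinarith
  simp only [Q] at hq
  rcases le_total 0 (x 0 * x 1) with hab | hab
  · refine ⟨BGL⁻¹, inv_mem BGL_mem_H, ?_⟩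
    rw [Binv_mulVec, Int.natAbs_lt_iff_sq_lt]
    exact sq_three_mul_sub_two_mul_lt hq hb h20 hab
  · refine ⟨BGL, BGL_mem_H, ?_⟩
    rw [coe_BGL, Bmat_mulVec, Int.natAbs_lt_iff_sq_lt]
    calc (2 * x 0 + 3 * x 1) ^ 2 = (3 * x 1 - 2 * -x 0) ^ 2 := by ring
      _ < x 1 ^ 2 := sq_three_mul_sub_two_mul_lt (c := x 2) (by linear_combination hq) hb
          (by rwa [neg_sq]) (by linarith)

theorem mem_HDelta2_of_Q_eq_two {x : Fin 3 → ℤ} (hq : Q x = 2) : x ∈ HDelta2 := by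
  induction hn : (x 1).natAbs using Nat.strong_induction_on generalizing x with
  | _ n ih =>
  rcases lt_or_ge (x 1).natAbs 2 with h | h
  · exact mem_HDelta2_of_natAbs_le_one hq (by omega)
  · obtain ⟨N, hN, hlt⟩ := exists_natAbs_mulVec_lt hq h
    exact mem_HDelta2_of_mulVec_mem hN (ih _ (hn ▸ hlt) (by rw [Q_mulVec hN, hq]) rfl)

lemma saturate8_orbit8_red8_of_mem_Delta2 {δ : Fin 3 → ℤ} (hδ : δ ∈ Delta2) :
    saturate8 (orbit8 (red8 δ)) = orbit8 (red8 δ) := by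
  simp only [Delta2, Set.mem_insert_iff, Set.mem_singleton_iff] at hδ
  rcases hδ with rfl | rfl | rfl | rfl | rfl <;> decide +kernel

lemma eq_of_mulVec_eq_of_mem_Delta2 {N : GL (Fin 3) ℤ} (hN : N ∈ H) {δ δ' : Fin 3 → ℤ}
    (hδ : δ ∈ Delta2) (hδ' : δ' ∈ Delta2) (h : (N : Matrix (Fin 3) (Fin 3) ℤ) *ᵥ δ' = δ) :
    δ' = δ := by
  have key := h ▸ red8_mulVec_mem_orbit8 hN (saturate8_orbit8_red8_of_mem_Delta2 hδ')
  simp only [Delta2, Set.mem_insert_iff, Set.mem_singleton_iff] at hδ hδ'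
  rcases hδ with rfl | rfl | rfl | rfl | rfl <;> rcases hδ' with rfl | rfl | rfl | rfl | rfl <;>
    first | rfl | exact absurd key (by decide +kernel)

lemma sq_sub_sq_eq_one {a b : ℤ} (h : a ^ 2 - b ^ 2 = 1) : b = 0 ∧ (a = 1 ∨ a = -1) := by
  have h' : (a - b) * (a + b) = 1 := by linear_combination h
  rcases Int.eq_one_or_neg_one_of_mul_eq_one' h' with ⟨h1, h2⟩ | ⟨h1, h2⟩ <;> omega

lemma exists_mulVec_eq_of_mulVec_fix {N : GL (Fin 3) ℤ} (hN : N ∈ H) {δ : Fin 3 → ℤ}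
    (hfix : (N : Matrix (Fin 3) (Fin 3) ℤ) *ᵥ δ = δ) {u : Fin 3 → ℤ}
    (hu : saturate8 (orbit8 (red8 u)) = orbit8 (red8 u)) :
    ∃ a b c : ℤ, (N : Matrix (Fin 3) (Fin 3) ℤ) *ᵥ u = ![a, b, c] ∧ Q ![a, b, c] = Q u ∧
      polarQ ![a, b, c] δ = polarQ u δ ∧ red8 ![a, b, c] ∈ orbit8 (red8 u) := by
  refine ⟨_, _, _, eta_fin_three_vec _, ?_⟩
  rw [← eta_fin_three_vec (_ *ᵥ u), Q_mulVec hN, ← hfix, polarQ_mulVec hN, hfix]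
  exact ⟨rfl, rfl, red8_mulVec_mem_orbit8 hN hu⟩

lemma eq_of_mulVec_basis {R : Type*} [NonAssocSemiring R] {A B : Matrix (Fin 3) (Fin 3) R}
    (h0 : A *ᵥ ![1, 0, 0] = B *ᵥ ![1, 0, 0]) (h1 : A *ᵥ ![0, 1, 0] = B *ᵥ ![0, 1, 0])
    (h2 : A *ᵥ ![0, 0, 1] = B *ᵥ ![0, 0, 1]) : A = B := by
  refine ext_of_mulVec_single fun i => ?_
  fin_cases i
  · convert h0 using 2 <;> ext j <;> fin_cases j <;> simp
  · convert h1 using 2 <;> ext j <;> fin_cases j <;> simp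
  · convert h2 using 2 <;> ext j <;> fin_cases j <;> simp

lemma eq_one_of_mulVec_fix_two_mul_one_zero {N : GL (Fin 3) ℤ} (hN : N ∈ H) {s : ℤ}
    (hs : s = 1 ∨ s = -1)
    (hfix : (N : Matrix (Fin 3) (Fin 3) ℤ) *ᵥ ![2 * s, 1, 0] = ![2 * s, 1, 0]) : N = 1 := by
  have hs2 : s ^ 2 = 1 := by rcases hs with rfl | rfl <;> norm_num
  have he3 : (N : Matrix (Fin 3) (Fin 3) ℤ) *ᵥ ![0, 0, 1] = ![0, 0, 1] := by
    obtain ⟨a, b, c, hNu, hQ, hp, h8⟩ := exists_mulVec_eq_of_mulVec_fix hN hfix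
      (u := ![0, 0, 1]) (by decide +kernel)
    simp only [Q_vec3, polarQ_vec3] at hQ hp
    obtain rfl : b = a * s := by linarith
    obtain ⟨rfl, hc⟩ := sq_sub_sq_eq_one (a := c) (b := a)
      (by linear_combination hQ + 2 * a ^ 2 * hs2)
    rw [zero_mul] at hNu h8
    rcases hc with rfl | rfl
    · simpa using hNu
    · exact absurd h8 (by decide +kernel)
  have he2 : (N : Matrix (Fin 3) (Fin 3) ℤ) *ᵥ ![0, 1, 0] =
      ![2 * s, 1, 0] - (2 * s) • (N : Matrix (Fin 3) (Fin 3) ℤ) *ᵥ ![1, 0, 0] := by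
    rw [← mulVec_smul, ← hfix, ← mulVec_sub]; congr; ext i; fin_cases i <;> simp
  have h8 := red8_mulVec_mem_orbit8 hN (v := ![0, 1, 0]) (by decide +kernel)
  obtain ⟨a, b, c, hNu, hQ, hp, -⟩ := exists_mulVec_eq_of_mulVec_fix hN hfix
    (u := ![1, 0, 0]) (by decide +kernel)
  simp only [Q_vec3, polarQ_vec3] at hQ hp
  obtain rfl : b = (a - 1) * s := by linarith
  obtain ⟨rfl, ha⟩ := sq_sub_sq_eq_one (a := a - 2) (b := c)
    (by linear_combination -hQ - 2 * (a - 1) ^ 2 * hs2)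
  obtain rfl | rfl : a = 3 ∨ a = 1 := by omega
  · -- `N e₁ = (3, 2s, 0)` would give `N e₂ = (-4s, -3, 0)`, outside the mod 8 orbit of `e₂`.
    rw [he2, hNu] at h8
    rcases hs with rfl | rfl <;> exact absurd h8 (by decide +kernel)
  · rw [hNu] at he2
    refine Units.ext (eq_of_mulVec_basis ?_ ?_ ?_) <;> simp only [Units.val_one, one_mulVec]
    · simpa using hNu
    · rw [he2]; ext i; fin_cases i <;> simp
    · exact he3

lemma eq_one_or_of_mulVec_fix_one_zero_one {N : GL (Fin 3) ℤ} (hN : N ∈ H) {s : ℤ}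
    (hs : s = 1 ∨ s = -1)
    (hfix : (N : Matrix (Fin 3) (Fin 3) ℤ) *ᵥ ![s, 0, 1] = ![s, 0, 1]) :
    N = 1 ∨ (s = 1 ∧ N = JGL) := by
  have hs2 : s ^ 2 = 1 := by rcases hs with rfl | rfl <;> norm_num
  have he2 : (N : Matrix (Fin 3) (Fin 3) ℤ) *ᵥ ![0, 1, 0] = ![0, 1, 0] := by
    obtain ⟨a, b, c, hNu, hQ, hp, h8⟩ := exists_mulVec_eq_of_mulVec_fix hN hfix
      (u := ![0, 1, 0]) (by decide +kernel)
    simp only [Q_vec3, polarQ_vec3] at hQ hp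
    obtain rfl : c = -(a * s) := by linarith
    have hc2 : (-(a * s)) ^ 2 = a ^ 2 := by rw [neg_sq, mul_pow, hs2, mul_one]
    obtain ⟨rfl, hb⟩ := sq_sub_sq_eq_one (a := b) (b := a) (by linarith)
    rw [zero_mul, neg_zero] at hNu h8
    rcases hb with rfl | rfl
    · simpa using hNu
    · exact absurd h8 (by decide +kernel)
  obtain ⟨a, b, c, hNu, hQ, hp, h8⟩ := exists_mulVec_eq_of_mulVec_fix hN hfix
    (u := ![1, 0, 0]) (by decide +kernel)
  have he3 : (N : Matrix (Fin 3) (Fin 3) ℤ) *ᵥ ![0, 0, 1] =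
      ![s, 0, 1] - s • (N : Matrix (Fin 3) (Fin 3) ℤ) *ᵥ ![1, 0, 0] := by
    rw [← mulVec_smul, ← hfix, ← mulVec_sub]; congr; ext i; fin_cases i <;> simp
  simp only [Q_vec3, polarQ_vec3] at hQ hp
  obtain rfl : c = s * (1 - a) := by linarith
  obtain ⟨hb, ha⟩ := sq_sub_sq_eq_one (a := 2 * a - 1) (b := 2 * b)
    (by linear_combination 2 * hQ - 2 * (1 - a) ^ 2 * hs2)
  obtain rfl : b = 0 := by omega
  obtain rfl | rfl : a = 1 ∨ a = 0 := by omega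
  · left
    rw [hNu] at he3
    refine Units.ext (eq_of_mulVec_basis ?_ ?_ ?_) <;> simp only [Units.val_one, one_mulVec]
    · simpa using hNu
    · exact he2
    · rw [he3]; ext i; fin_cases i <;> simp
  · rcases hs with rfl | rfl
    · right
      refine ⟨rfl, Units.ext (eq_of_mulVec_basis ?_ ?_ ?_)⟩ <;> rw [coe_JGL, Jmat_mulVec]
      · simpa using hNu
      · exact he2
      · rw [he3, hNu]; decide
    · exact absurd h8 (by decide +kernel)

lemma eq_one_or_of_mulVec_fix_of_mem_Delta2 {N : GL (Fin 3) ℤ} (hN : N ∈ H) {δ : Fin 3 → ℤ}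
    (hδ : δ ∈ Delta2) (hfix : (N : Matrix (Fin 3) (Fin 3) ℤ) *ᵥ δ = δ) :
    N = 1 ∨ (δ ∈ ({![1, 0, 1], ![-1, 0, -1]} : Set (Fin 3 → ℤ)) ∧ N = JGL) := by
  simp only [Delta2, Set.mem_insert_iff, Set.mem_singleton_iff] at hδ
  rcases hδ with rfl | rfl | rfl | rfl | rfl
  · exact Or.inl (eq_one_of_mulVec_fix_two_mul_one_zero hN (s := 1) (Or.inl rfl) hfix)
  · exact Or.inl (eq_one_of_mulVec_fix_two_mul_one_zero hN (s := -1) (Or.inr rfl) hfix)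
  · rcases eq_one_or_of_mulVec_fix_one_zero_one hN (Or.inl rfl) hfix with h | ⟨-, h⟩
    exacts [Or.inl h, Or.inr ⟨by simp, h⟩]
  · rcases eq_one_or_of_mulVec_fix_one_zero_one hN (Or.inr rfl) hfix with h | ⟨h, -⟩
    exacts [Or.inl h, absurd h (by norm_num)]
  · rw [show (![-1, 0, -1] : Fin 3 → ℤ) = -![1, 0, 1] by simp, mulVec_neg, neg_inj] at hfix
    rcases eq_one_or_of_mulVec_fix_one_zero_one hN (Or.inl rfl) hfix with h | ⟨-, h⟩
    exacts [Or.inl h, Or.inr ⟨by simp, h⟩]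

/-- Every length-3 Büchi sequence of integers is `M δ` for some `M ∈ H` and a
unique `δ ∈ Δ₂`; moreover `M` is unique if `δ ∉ {(1,0,1), (-1,0,-1)}`, and there
are exactly two such matrices, `M` and `M * J`, otherwise. -/
theorem buchi3_representation (x : Fin 3 → ℤ)
    (hx : x 0 ^ 2 - 2 * x 1 ^ 2 + x 2 ^ 2 = 2) :
    (∃ M ∈ H, ∃ δ ∈ Delta2, x = (M : Matrix (Fin 3) (Fin 3) ℤ).mulVec δ) ∧
    (∀ M ∈ H, ∀ δ ∈ Delta2, x = (M : Matrix (Fin 3) (Fin 3) ℤ).mulVec δ →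
      ∀ M' ∈ H, ∀ δ' ∈ Delta2, x = (M' : Matrix (Fin 3) (Fin 3) ℤ).mulVec δ' →
        δ' = δ ∧
        (δ ∉ ({![1, 0, 1], ![-1, 0, -1]} : Set (Fin 3 → ℤ)) → M' = M) ∧
        (δ ∈ ({![1, 0, 1], ![-1, 0, -1]} : Set (Fin 3 → ℤ)) →
          M' = M ∨ M' = M * JGL)) := by
  refine ⟨mem_HDelta2_of_Q_eq_two hx, fun M hM δ hδ hxM M' hM' δ' hδ' hxM' => ?_⟩
  have hN : M⁻¹ * M' ∈ H := mul_mem (inv_mem hM) hM'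
  have hfix : ((M⁻¹ * M' : GL (Fin 3) ℤ) : Matrix (Fin 3) (Fin 3) ℤ) *ᵥ δ' = δ := by
    rw [Units.val_mul, ← mulVec_mulVec, ← hxM', hxM, mulVec_mulVec, M.inv_mul, one_mulVec]
  obtain rfl := eq_of_mulVec_eq_of_mem_Delta2 hN hδ hδ' hfix
  rcases eq_one_or_of_mulVec_fix_of_mem_Delta2 hN hδ hfix with h | ⟨hδJ, h⟩
  · have hM' : M' = M := (inv_mul_eq_one.mp h).symm
    exact ⟨rfl, fun _ => hM', fun _ => Or.inl hM'⟩
  · exact ⟨rfl, fun h' => absurd hδJ h', fun _ => Or.inr (inv_mul_eq_iff_eq_mul.mp h)⟩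
end

section
/- Let a be an integer with |a| ≤ 2 and let x = (x₁,x₂,x₃) ∈ Γ_a with x ∉ Θ_a. Then the sequence (x₁², x₂², x₃²) is either strictly increasing or strictly decreasing. -/
/-- If `|a| ≤ 2` and `x ∈ Γ a \ Θ a`, then `(x₁², x₂², x₃²)` is either strictly
increasing or strictly decreasing. -/
theorem squares_monotone (a : ℤ) (ha : |a| ≤ 2) (x : Fin 3 → ℤ)
    (hx : x ∈ Gamma a) (hx' : x ∉ Theta a) :
    (x 0 ^ 2 < x 1 ^ 2 ∧ x 1 ^ 2 < x 2 ^ 2) ∨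
    (x 1 ^ 2 < x 0 ^ 2 ∧ x 2 ^ 2 < x 1 ^ 2) := by
  obtain ⟨ha1, ha2⟩ := abs_le.mp ha
  have heq : x 0 ^ 2 - 2 * x 1 ^ 2 + x 2 ^ 2 = a := hx
  have habs : |x 0| ^ 2 - 2 * |x 1| ^ 2 + |x 2| ^ 2 = a := by
    simpa [sq_abs] using heq
  have hs0 : |x 0| ^ 2 = x 0 ^ 2 := sq_abs _
  have hs1 : |x 1| ^ 2 = x 1 ^ 2 := sq_abs _
  have hs2 : |x 2| ^ 2 = x 2 ^ 2 := sq_abs _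
  have h0 : (0:ℤ) ≤ |x 0| := abs_nonneg _
  have h1 : (0:ℤ) ≤ |x 1| := abs_nonneg _
  have h2 : (0:ℤ) ≤ |x 2| := abs_nonneg _
  unfold Theta at hx'
  rcases lt_or_ge a 0 with hneg | hpos
  · rw [if_pos hneg] at hx'
    have hm : ¬ (max |x 0| |x 2| ≤ |x 1|) := fun hm => hx' ⟨hx, hm⟩
    rw [max_le_iff, not_and_or] at hm
    rcases hm with h | h <;> rw [not_le] at h
    · have h' : |x 1| + 1 ≤ |x 0| := Int.add_one_le_iff.mpr h
      have hsq : (|x 1| + 1) ^ 2 ≤ |x 0| ^ 2 := pow_le_pow_left₀ (by positivity) h' 2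
      right
      constructor <;> nlinarith [hsq]
    · have h' : |x 1| + 1 ≤ |x 2| := Int.add_one_le_iff.mpr h
      have hsq : (|x 1| + 1) ^ 2 ≤ |x 2| ^ 2 := pow_le_pow_left₀ (by positivity) h' 2
      left
      constructor <;> nlinarith [hsq]
  · rw [if_neg (not_lt.mpr hpos)] at hx'
    simp only [Set.mem_setOf_eq, Cset, Matrix.cons_val_zero, Matrix.cons_val_one,
      Matrix.head_cons, not_and_or, not_or, not_le] at hx'
    rcases hx' with h | h | h
    · exact absurd hx h
    · obtain ⟨hlt, hlt2⟩ := h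
      have h' : |x 1| + 1 ≤ |x 0| := Int.add_one_le_iff.mpr hlt
      have hsq : (|x 1| + 1) ^ 2 ≤ |x 0| ^ 2 := pow_le_pow_left₀ (by positivity) h' 2
      have hb : 1 ≤ |x 1| := by omega
      right
      constructor <;> nlinarith [hsq]
    · obtain ⟨hlt, hlt2⟩ := h
      have h' : |x 1| + 1 ≤ |x 2| := Int.add_one_le_iff.mpr hlt
      have hsq : (|x 1| + 1) ^ 2 ≤ |x 2| ^ 2 := pow_le_pow_left₀ (by positivity) h' 2
      have hb : 1 ≤ |x 1| := by omega
      left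
      constructor <;> nlinarith [hsq]
end

section
/- Let ε ∈ {−1,1} and let a be an integer with |a| ≤ 2. If (x₁,x₂,x₃) ∈ Γ_a satisfies |x₁| < |x₂| < |x₃|, and (y₁,y₂,x₃) denotes the column vector B^ε·(x₁,x₂,x₃), then (y₁,y₂,x₃) ∈ Γ_a, |y₁| > |y₂| > |x₃|, and ε·y₁·y₂ > 0. -/
open Matrix

private lemma core (ε a : ℤ) (hε : ε = 1 ∨ ε = -1) (ha : |a| ≤ 2) (x : Fin 3 → ℤ)
    (hx : x ∈ Gamma a) (h1 : |x 0| < |x 1|) (h2 : |x 1| < |x 2|)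
    (y : Fin 3 → ℤ) (hy0 : y 0 = 3 * x 0 + 4 * ε * x 1) (hy1 : y 1 = 2 * ε * x 0 + 3 * x 1)
    (hy2 : y 2 = x 2) :
    y ∈ Gamma a ∧ y 2 = x 2 ∧ |y 1| > |x 2| ∧ |y 0| > |y 1| ∧ ε * (y 0 * y 1) > 0 := by
  have hε2 : ε ^ 2 = 1 := by rcases hε with h | h <;> simp [h]
  have hx' : x 0 ^ 2 - 2 * x 1 ^ 2 + x 2 ^ 2 = a := hx
  set u := |x 0| with hu
  set v := |x 1| with hv
  set w := |x 2| with hw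
  have hu2 : u ^ 2 = x 0 ^ 2 := sq_abs _
  have hv2 : v ^ 2 = x 1 ^ 2 := sq_abs _
  have hw2 : w ^ 2 = x 2 ^ 2 := sq_abs _
  have hu0 : 0 ≤ u := abs_nonneg _
  have h1' : u + 1 ≤ v := h1
  have h2' : v + 1 ≤ w := h2
  set p := ε * (x 0 * x 1) with hpdef
  have habs : |x 0 * x 1| = u * v := abs_mul _ _
  have hp1 : p ≤ u * v := by
    rcases hε with h | h
    · rw [hpdef, h, one_mul, ← habs]; exact le_abs_self _
    · rw [hpdef, h, neg_one_mul, ← habs]; exact neg_le_abs _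
  have hp2 : -(u * v) ≤ p := by
    rcases hε with h | h
    · rw [hpdef, h, one_mul, ← habs]; exact neg_abs_le _
    · rw [hpdef, h, neg_one_mul, ← habs]; exact neg_le_neg (le_abs_self _)
  have ha2 : a ≤ 2 := (abs_le.mp ha).2
  have key : (7 : ℤ) ≤ 5 * u ^ 2 - 12 * (u * v) + 7 * v ^ 2 := by
    have : (1 : ℤ) * 7 ≤ (v - u) * (7 * v - 5 * u) :=
      mul_le_mul (by linarith) (by linarith) (by norm_num) (by linarith)
    nlinarith [this]
  have key2 : (12 : ℤ) ≤ 6 * u ^ 2 - 17 * (u * v) + 12 * v ^ 2 := by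
    have : (3 : ℤ) * 4 ≤ (3 * v - 2 * u) * (4 * v - 3 * u) :=
      mul_le_mul (by linarith) (by linarith) (by norm_num) (by linarith)
    nlinarith [this]
  have ey0 : y 0 ^ 2 = 9 * x 0 ^ 2 + 24 * p + 16 * ε ^ 2 * x 1 ^ 2 := by
    rw [hy0, hpdef]; ring
  have ey1 : y 1 ^ 2 = 4 * ε ^ 2 * x 0 ^ 2 + 12 * p + 9 * x 1 ^ 2 := by
    rw [hy1, hpdef]; ring
  rw [hε2] at ey0 ey1
  have eprod : ε * (y 0 * y 1) = 6 * x 0 ^ 2 + 17 * p + 12 * x 1 ^ 2 := by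
    rcases hε with h | h <;> rw [hy0, hy1, hpdef, h] <;> ring
  have hG : y ∈ Gamma a := by
    show y 0 ^ 2 - 2 * y 1 ^ 2 + y 2 ^ 2 = a
    rw [ey0, ey1, hy2]; linarith
  have h3 : w ^ 2 < y 1 ^ 2 := by rw [ey1]; linarith
  have h4 : y 1 ^ 2 < y 0 ^ 2 := by rw [ey0, ey1]; linarith
  have h3' : x 2 ^ 2 < y 1 ^ 2 := by rw [← hw2]; exact h3
  exact ⟨hG, hy2, sq_lt_sq.mp h3', sq_lt_sq.mp h4, by rw [eprod]; linarith⟩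

/-- If `x ∈ Γ a` is strictly increasing in absolute value and `|a| ≤ 2`, then
`B^ε x = (y₁, y₂, x₃)` is in `Γ a`, is strictly decreasing in absolute value,
and satisfies `ε y₁ y₂ > 0`. -/
theorem B_decreasing (ε : ℤ) (hε : ε = 1 ∨ ε = -1) (a : ℤ) (ha : |a| ≤ 2)
    (x : Fin 3 → ℤ) (hx : x ∈ Gamma a)
    (h1 : |x 0| < |x 1|) (h2 : |x 1| < |x 2|)
    (y : Fin 3 → ℤ) (hy : y = ((BGL ^ ε : GL (Fin 3) ℤ) : Matrix (Fin 3) (Fin 3) ℤ).mulVec x) :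
    y ∈ Gamma a ∧ y 2 = x 2 ∧ |y 1| > |x 2| ∧ |y 0| > |y 1| ∧ ε * (y 0 * y 1) > 0 := by
  rcases hε with h | h <;> subst h <;> subst hy
  · refine core 1 a (Or.inl rfl) ha x hx h1 h2 _ ?_ ?_ ?_ <;>
      simp [zpow_one, BGL, Bmat, mulVec, dotProduct, Fin.sum_univ_succ]
  · refine core (-1) a (Or.inr rfl) ha x hx h1 h2 _ ?_ ?_ ?_ <;>
      simp [_root_.zpow_neg_one, BGL, Bmat, mulVec, dotProduct, Fin.sum_univ_succ]
end

section
/- If y = (y₁, …, y_N) is a non-trivial Büchi sequence of length N ≥ 3 which is increasing in absolute value (|y₁| ≤ |y₂| ≤ ⋯ ≤ |y_N|), then for every index n with 2 ≤ n ≤ N−1 we have |y_{n+1}| − |y_n| < |y_n| − |y_{n−1}|. -/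
/-- If `y₁, …, y_N` is a non-trivial Büchi sequence (`y_{n+2}² - 2y_{n+1}² + y_n² = 2`)
which is increasing in absolute value, then the gaps `|y_{n+1}| - |y_n|` are
strictly decreasing. -/
theorem gaps_decreasing (N : ℕ) (hN : 3 ≤ N) (y : ℕ → ℤ)
    (hbuchi : ∀ n, 1 ≤ n → n + 2 ≤ N →
      y (n + 2) ^ 2 - 2 * y (n + 1) ^ 2 + y n ^ 2 = 2)
    (hnontriv : ¬ ∃ ν : ℤ, ∀ n, 1 ≤ n → n ≤ N → y n ^ 2 = (ν + n) ^ 2)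
    (hincr : ∀ n, 1 ≤ n → n + 1 ≤ N → |y n| ≤ |y (n + 1)|) :
    ∀ n, 2 ≤ n → n + 1 ≤ N → |y (n + 1)| - |y n| < |y n| - |y (n - 1)| := by
  intro n hn2 hnN
  by_contra hcon
  push_neg at hcon
  obtain ⟨m, rfl⟩ : ∃ m, n = m + 1 := ⟨n - 1, by omega⟩
  have hm1 : 1 ≤ m := by omega
  have hmN : m + 2 ≤ N := by omega
  simp only [Nat.add_sub_cancel] at hcon
  have e2 : m + 1 + 1 = m + 2 := by omega
  rw [e2] at hcon
  have hA : (0:ℤ) ≤ |y m| := abs_nonneg _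
  have hAB : |y m| ≤ |y (m+1)| := hincr m hm1 (by omega)
  have hBC : |y (m+1)| ≤ |y (m+2)| := by
    have := hincr (m+1) (by omega) (by omega)
    rwa [e2] at this
  have hrec := hbuchi m hm1 hmN
  rw [← sq_abs (y (m+2)), ← sq_abs (y (m+1)), ← sq_abs (y m)] at hrec
  -- key quadratic identity in the gaps
  have key : 2 * |y (m+1)| * ((|y (m+2)| - |y (m+1)|) - (|y (m+1)| - |y m|))
      + (|y (m+2)| - |y (m+1)|)^2 + (|y (m+1)| - |y m|)^2 = 2 := by
    linear_combination hrec
  have hnn : (0:ℤ) ≤ 2 * |y (m+1)| * ((|y (m+2)| - |y (m+1)|) - (|y (m+1)| - |y m|)) := by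
    have h1 : (0:ℤ) ≤ 2 * |y (m+1)| := by linarith
    have h2 : (0:ℤ) ≤ (|y (m+2)| - |y (m+1)|) - (|y (m+1)| - |y m|) := by linarith
    exact mul_nonneg h1 h2
  have hp2 : (|y (m+2)| - |y (m+1)|)^2 ≤ 2 := by nlinarith [sq_nonneg (|y (m+1)| - |y m|)]
  have hp1 : |y (m+2)| - |y (m+1)| ≤ 1 := by nlinarith
  have hpcase : |y (m+2)| - |y (m+1)| = 0 ∨ |y (m+2)| - |y (m+1)| = 1 := by omega
  have hqcase : |y (m+1)| - |y m| = 0 ∨ |y (m+1)| - |y m| = 1 := by omega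
  have hB1 : |y (m+1)| = |y m| + 1 ∧ |y (m+2)| = |y (m+1)| + 1 := by
    rcases hqcase with hq | hq <;> rcases hpcase with hp | hp
    · rw [hp, hq] at key; norm_num at key
    · rw [hp, hq] at key; omega
    · omega
    · exact ⟨by omega, by omega⟩
  -- difference recurrence
  have hd : ∀ k, 1 ≤ k → k + 2 ≤ N →
      y (k+2)^2 - y (k+1)^2 = y (k+1)^2 - y k^2 + 2 := by
    intro k h1 h2
    have := hbuchi k h1 h2
    linarith
  have hdm : y (m+1)^2 - y m^2 = 2 * |y m| + 1 := by
    rw [← sq_abs (y (m+1)), ← sq_abs (y m), hB1.1]; ring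
  -- propagate the difference upward
  have Hup : ∀ j : ℕ, m + j + 1 ≤ N →
      y (m+j+1)^2 - y (m+j)^2 = 2 * |y m| + 1 + 2 * j := by
    intro j
    induction j with
    | zero => intro _; simpa using hdm
    | succ j ih =>
      intro h
      have ih' := ih (by omega)
      have hstep := hd (m+j) (by omega) (by omega)
      rw [show m + (j+1) + 1 = m + j + 2 by omega, show m + (j+1) = m + j + 1 by omega]
      push_cast
      linarith
  -- propagate the difference downward
  have Hdown : ∀ j : ℕ, j + 1 ≤ m →
      y (m-j+1)^2 - y (m-j)^2 = 2 * |y m| + 1 - 2 * j := by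
    intro j
    induction j with
    | zero => intro _; simpa using hdm
    | succ j ih =>
      intro h
      have ih' := ih (by omega)
      have hstep := hd (m-(j+1)) (by omega) (by omega)
      have e1 : m - (j+1) + 1 = m - j := by omega
      have e2' : m - (j+1) + 2 = m - j + 1 := by omega
      rw [e1, e2'] at hstep
      rw [e1]
      push_cast
      linarith
  -- general difference formula
  have hdk : ∀ k, 1 ≤ k → k + 1 ≤ N →
      y (k+1)^2 - y k^2 = 2 * (|y m| + k - m) + 1 := by
    intro k h1 h2
    rcases le_or_gt m k with h | h
    · have hu := Hup (k - m) (by omega)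
      have e1 : m + (k - m) = k := by omega
      rw [e1] at hu
      have ec : ((k - m : ℕ) : ℤ) = (k : ℤ) - m := by omega
      rw [ec] at hu
      linarith
    · have hdn := Hdown (m - k) (by omega)
      have e1 : m - (m - k) = k := by omega
      rw [e1] at hdn
      have ec : ((m - k : ℕ) : ℤ) = (m : ℤ) - k := by omega
      rw [ec] at hdn
      linarith
  -- values upward
  have Lup : ∀ j : ℕ, m + j ≤ N → |y (m + j)| = |y m| + j := by
    intro j
    induction j with
    | zero => intro _; simp
    | succ j ih =>
      intro h
      have ih' := ih (by omega)
      have hdkj := hdk (m+j) (by omega) (by omega)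
      have ec : ((m + j : ℕ) : ℤ) = (m : ℤ) + j := by push_cast; ring
      rw [ec] at hdkj
      have h3 : y (m+j)^2 = (|y m| + j)^2 := by rw [← sq_abs (y (m+j)), ih']
      have hsq : |y (m+j+1)|^2 = (|y m| + j + 1)^2 := by
        rw [sq_abs]; linear_combination hdkj + h3
      have hf : (|y (m+j+1)| - (|y m| + j + 1)) * (|y (m+j+1)| + (|y m| + j + 1)) = 0 := by
        linear_combination hsq
      have hb : (0:ℤ) ≤ |y (m+j+1)| := abs_nonneg _
      have hj : (0:ℤ) ≤ (j:ℤ) := by positivity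
      have e1 : m + (j+1) = m + j + 1 := by omega
      rw [e1]
      push_cast
      rcases mul_eq_zero.1 hf with h0 | h0
      · linarith
      · linarith
  -- values downward
  have Ldown : ∀ j : ℕ, j + 1 ≤ m → |y (m - j)| = |y m| - j := by
    intro j
    induction j with
    | zero => intro _; simp
    | succ j ih =>
      intro h
      have ih' := ih (by omega)
      have hdkj := hdk (m-(j+1)) (by omega) (by omega)
      have e1 : m - (j+1) + 1 = m - j := by omega
      rw [e1] at hdkj
      have ec : ((m - (j+1) : ℕ) : ℤ) = (m : ℤ) - j - 1 := by omega
      rw [ec] at hdkj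
      have h3 : y (m-j)^2 = (|y m| - j)^2 := by rw [← sq_abs (y (m-j)), ih']
      have hsq : |y (m-(j+1))|^2 = (|y m| - j - 1)^2 := by
        rw [sq_abs]; linear_combination h3 - hdkj
      have hf : (|y (m-(j+1))| - (|y m| - j - 1)) * (|y (m-(j+1))| + (|y m| - j - 1)) = 0 := by
        linear_combination hsq
      have hb : (0:ℤ) ≤ |y (m-(j+1))| := abs_nonneg _
      have hle : |y (m-(j+1))| ≤ |y m| - j := by
        have := hincr (m-(j+1)) (by omega) (by omega)
        rw [e1] at this
        rw [← ih']
        exact this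
      push_cast
      rcases mul_eq_zero.1 hf with h0 | h0
      · linarith
      · -- |y (m-(j+1))| = -( |y m| - j - 1 ), forces equality via integrality
        omega
  -- conclude triviality, contradiction
  exact hnontriv ⟨|y m| - m, by
    intro k hk1 hkN
    rcases le_or_gt m k with h | h
    · have hv := Lup (k - m) (by omega)
      rw [show m + (k - m) = k by omega] at hv
      have ec : ((k - m : ℕ) : ℤ) = (k : ℤ) - m := by omega
      rw [ec] at hv
      rw [← sq_abs (y k), hv]; ring
    · have hv := Ldown (m - k) (by omega)
      rw [show m - (m - k) = k by omega] at hv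
      have ec : ((m - k : ℕ) : ℤ) = (m : ℤ) - k := by omega
      rw [ec] at hv
      rw [← sq_abs (y k), hv]; ring⟩
end

section
/- If M ∈ H has entry M₂₃ = 0 (row 2, column 3), then M = I, or M = J, or M = B^n for some integer n, or M = J·B^n for some integer n. -/
open Matrix

/-- The image of `H` in `GL₃(ℤ/4)`: an explicit 8-element set. -/
abbrev inS (X : Matrix (Fin 3) (Fin 3) (ZMod 4)) : Prop :=
  X = !![0,0,1;0,1,0;1,0,0] ∨ X = !![0,0,1;2,3,0;3,0,0] ∨
  X = !![0,0,3;0,3,2;1,0,0] ∨ X = !![0,0,3;2,1,2;3,0,0] ∨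
  X = !![1,0,0;0,1,0;0,0,1] ∨ X = !![1,0,0;0,3,2;0,0,3] ∨
  X = !![3,0,0;2,1,2;0,0,3] ∨ X = !![3,0,0;2,3,0;0,0,1]

lemma inS_mul {X Y : Matrix (Fin 3) (Fin 3) (ZMod 4)} (hX : inS X) (hY : inS Y) :
    inS (X * Y) := by
  rcases hX with rfl|rfl|rfl|rfl|rfl|rfl|rfl|rfl <;>
    rcases hY with rfl|rfl|rfl|rfl|rfl|rfl|rfl|rfl <;> decide

/-- The invariant: preserves the form `Q` and reduces into `S` mod 4. -/
abbrev goodM (A : Matrix (Fin 3) (Fin 3) ℤ) : Prop :=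
  Aᵀ * Qmat * A = Qmat ∧ inS (A.map (Int.castRingHom (ZMod 4)))

lemma goodM_mul {A B : Matrix (Fin 3) (Fin 3) ℤ} (hA : goodM A) (hB : goodM B) :
    goodM (A * B) := by
  constructor
  · have : (A * B)ᵀ * Qmat * (A * B) = Bᵀ * (Aᵀ * Qmat * A) * B := by
      rw [Matrix.transpose_mul]
      simp only [Matrix.mul_assoc]
    rw [this, hA.1]
    exact hB.1
  · rw [Matrix.map_mul]
    exact inS_mul hA.2 hB.2

abbrev P (M : GL (Fin 3) ℤ) : Prop :=
  goodM (M : Matrix (Fin 3) (Fin 3) ℤ) ∧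
    goodM ((M⁻¹ : GL (Fin 3) ℤ) : Matrix (Fin 3) (Fin 3) ℤ)

/-- The subgroup of matrices satisfying the invariant. -/
def K : Subgroup (GL (Fin 3) ℤ) where
  carrier := {M | P M}
  one_mem' := by constructor <;> exact ⟨by decide, by decide⟩
  mul_mem' := by
    intro a b ha hb
    refine ⟨goodM_mul ha.1 hb.1, ?_⟩
    rw [_root_.mul_inv_rev]
    exact goodM_mul hb.2 ha.2
  inv_mem' := by
    intro a ha
    refine ⟨ha.2, ?_⟩
    rw [inv_inv]
    exact ha.1

lemma memH_P {M : GL (Fin 3) ℤ} (hM : M ∈ H) : P M := by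
  have : H ≤ K := by
    rw [H, Subgroup.closure_le]
    rintro x (rfl | rfl)
    · exact ⟨⟨by decide, by decide⟩, ⟨by decide, by decide⟩⟩
    · exact ⟨⟨by decide, by decide⟩, ⟨by decide, by decide⟩⟩
  exact this hM

/-- Entrywise form of the quadratic-form invariant. -/
lemma form_entries {M : GL (Fin 3) ℤ} (hM : M ∈ H) (i j : Fin 3) :
    (M : Matrix (Fin 3) (Fin 3) ℤ) 0 i * (M : Matrix (Fin 3) (Fin 3) ℤ) 0 j
      - 2 * ((M : Matrix (Fin 3) (Fin 3) ℤ) 1 i * (M : Matrix (Fin 3) (Fin 3) ℤ) 1 j)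
      + (M : Matrix (Fin 3) (Fin 3) ℤ) 2 i * (M : Matrix (Fin 3) (Fin 3) ℤ) 2 j
      = Qmat i j := by
  have hq := (memH_P hM).1.1
  have h := congrFun (congrFun hq i) j
  simp [Matrix.mul_apply, Matrix.transpose_apply, Fin.sum_univ_three, Qmat] at h ⊢
  linear_combination h

lemma mapS {M : GL (Fin 3) ℤ} (hM : M ∈ H) :
    inS ((M : Matrix (Fin 3) (Fin 3) ℤ).map (Int.castRingHom (ZMod 4))) :=
  (memH_P hM).1.2

lemma narrow (X : Matrix (Fin 3) (Fin 3) (ZMod 4)) (hX : inS X)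
    (h02 : X 0 2 = 0) (h12 : X 1 2 = 0) (h22 : X 2 2 = 1) :
    (X 0 0 = 1 ∧ X 1 0 = 0 ∧ X 1 1 = 1) ∨ (X 0 0 = 3 ∧ X 1 0 = 2 ∧ X 1 1 = 3) := by
  rcases hX with rfl|rfl|rfl|rfl|rfl|rfl|rfl|rfl <;> revert h02 h12 h22 <;> decide

lemma classify (X : Matrix (Fin 3) (Fin 3) (ZMod 4)) (hX : inS X) (h12 : X 1 2 = 0) :
    (X 0 2 = 0 ∧ X 2 2 = 1) ∨ (X 0 2 = 1 ∧ X 2 2 = 0) := by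
  rcases hX with rfl|rfl|rfl|rfl|rfl|rfl|rfl|rfl <;> revert h12 <;> decide

/-- Pell descent: positive solutions of `a² - 2c² = 1` give powers of `B`. -/
lemma pell_s16 : ∀ (k : ℕ) (a c : ℤ), c.natAbs = k → 0 < a → a ^ 2 - 2 * c ^ 2 = 1 →
    ∃ n : ℤ, ((BGL ^ n : GL (Fin 3) ℤ) : Matrix (Fin 3) (Fin 3) ℤ)
      = !![a, 2 * c, 0; c, a, 0; 0, 0, 1] := by
  intro k
  induction k using Nat.strong_induction_on with
  | _ k ih =>
    intro a c hk ha he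
    rcases lt_trichotomy c 0 with hc | hc | hc
    · -- c < 0 : descend using B
      have h1 : 0 < 3 * a + 4 * c := by nlinarith [sq_nonneg (3*a + 4*c)]
      have h2 : c < 2 * a + 3 * c := by nlinarith [sq_nonneg (a + c)]
      have h3 : 2 * a + 3 * c < -c := by nlinarith [sq_nonneg (a + 2*c)]
      have hlt : (2 * a + 3 * c).natAbs < k := by omega
      obtain ⟨n, hn⟩ := ih _ hlt (3 * a + 4 * c) (2 * a + 3 * c) rfl h1
        (by linear_combination he)
      refine ⟨n - 1, ?_⟩
      have hdec : BGL ^ n = BGL * BGL ^ (n - 1) := by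
        rw [← _root_.zpow_one_add]; congr 1; ring
      have hval : ((BGL ^ (n-1) : GL (Fin 3) ℤ) : Matrix (Fin 3) (Fin 3) ℤ)
          = !![3, -4, 0; -2, 3, 0; 0, 0, 1] *
            ((BGL ^ n : GL (Fin 3) ℤ) : Matrix (Fin 3) (Fin 3) ℤ) := by
        rw [hdec, Units.val_mul, ← Matrix.mul_assoc]
        have hone : (!![3, -4, 0; -2, 3, 0; 0, 0, 1] : Matrix (Fin 3) (Fin 3) ℤ)
            * (BGL : Matrix (Fin 3) (Fin 3) ℤ) = 1 := by decide
        rw [hone, Matrix.one_mul]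
      rw [hval, hn]
      ext i j
      fin_cases i <;> fin_cases j <;>
        simp [Matrix.mul_apply, Fin.sum_univ_three] <;> ring
    · -- c = 0 : a = 1
      have ha1 : a = 1 := by nlinarith
      subst ha1; subst hc
      exact ⟨0, by decide⟩
    · -- c > 0 : descend using B⁻¹
      have h1 : 0 < 3 * a - 4 * c := by nlinarith [sq_nonneg (3*a - 4*c)]
      have h2 : -c < 3 * c - 2 * a := by nlinarith [sq_nonneg (a - 2*c)]
      have h3 : 3 * c - 2 * a < c := by nlinarith [sq_nonneg (a - c)]
      have hlt : (3 * c - 2 * a).natAbs < k := by omega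
      obtain ⟨n, hn⟩ := ih _ hlt (3 * a - 4 * c) (3 * c - 2 * a) rfl h1
        (by linear_combination he)
      refine ⟨n + 1, ?_⟩
      have hdec : BGL ^ (n + 1 : ℤ) = BGL * BGL ^ n := by
        rw [← _root_.zpow_one_add]; congr 1; ring
      rw [hdec, Units.val_mul, hn]
      ext i j
      fin_cases i <;> fin_cases j <;>
        simp [BGL, Bmat, Matrix.mul_apply, Fin.sum_univ_three] <;> ring

/-- Key lemma: an element of `H` whose third column is `e₃` is a power of `B`. -/
lemma third_col_e3 (M : GL (Fin 3) ℤ) (hM : M ∈ H)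
    (h0 : (M : Matrix (Fin 3) (Fin 3) ℤ) 0 2 = 0)
    (h1 : (M : Matrix (Fin 3) (Fin 3) ℤ) 1 2 = 0)
    (h2 : (M : Matrix (Fin 3) (Fin 3) ℤ) 2 2 = 1) :
    ∃ n : ℤ, M = BGL ^ n := by
  have e02 := form_entries hM 0 2
  have e12 := form_entries hM 1 2
  have e00 := form_entries hM 0 0
  have e01 := form_entries hM 0 1
  have e11 := form_entries hM 1 1
  rw [h0, h1, h2, show Qmat 0 2 = 0 from rfl] at e02
  rw [h0, h1, h2, show Qmat 1 2 = 0 from rfl] at e12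
  -- third row is (0, 0, 1)
  have r0 : (M : Matrix (Fin 3) (Fin 3) ℤ) 2 0 = 0 := by linear_combination e02
  have r1 : (M : Matrix (Fin 3) (Fin 3) ℤ) 2 1 = 0 := by linear_combination e12
  rw [r0, show Qmat 0 0 = 1 from rfl] at e00
  rw [r0, r1, show Qmat 0 1 = 0 from rfl] at e01
  rw [r1, show Qmat 1 1 = -2 from rfl] at e11
  set a := (M : Matrix (Fin 3) (Fin 3) ℤ) 0 0 with ha_def
  set b := (M : Matrix (Fin 3) (Fin 3) ℤ) 0 1 with hb_def
  set c := (M : Matrix (Fin 3) (Fin 3) ℤ) 1 0 with hc_def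
  set d := (M : Matrix (Fin 3) (Fin 3) ℤ) 1 1 with hd_def
  have e00' : a * a - 2 * (c * c) = 1 := by linear_combination e00
  have e01' : a * b = 2 * (c * d) := by linear_combination e01
  have e11' : b * b - 2 * (d * d) = -2 := by linear_combination e11
  have h4 : (a * b) * (a * b) = (2 * (c * d)) * (2 * (c * d)) := by rw [e01']
  have hd2 : 2 * (d * d) = 2 * (a * a) := by
    linear_combination (-2 * (d * d)) * e00' + (-(a * a)) * e11' + h4
  have hd2' : d * d = a * a := by linarith
  have hfac : (d - a) * (d + a) = 0 := by linear_combination hd2'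
  -- mod 4 data
  have hs := mapS hM
  have x02 : ((M : Matrix (Fin 3) (Fin 3) ℤ).map (Int.castRingHom (ZMod 4))) 0 2 = 0 := by
    simp [Matrix.map_apply, h0]
  have x12 : ((M : Matrix (Fin 3) (Fin 3) ℤ).map (Int.castRingHom (ZMod 4))) 1 2 = 0 := by
    simp [Matrix.map_apply, h1]
  have x22 : ((M : Matrix (Fin 3) (Fin 3) ℤ).map (Int.castRingHom (ZMod 4))) 2 2 = 1 := by
    simp [Matrix.map_apply, h2]
  have hnar := narrow _ hs x02 x12 x22
  simp only [Matrix.map_apply, Int.coe_castRingHom, ← ha_def, ← hb_def, ← hc_def,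
    ← hd_def] at hnar
  rcases mul_eq_zero.mp hfac with hda | hda
  · -- d = a
    have hda' : d = a := by linarith
    have ha0 : a ≠ 0 := by
      intro h'
      rw [h'] at e00'
      nlinarith [sq_nonneg c]
    have hb2c : b = 2 * c := by
      have : a * b = a * (2 * c) := by rw [hda'] at e01'; linear_combination e01'
      exact mul_left_cancel₀ ha0 this
    have hmat : (M : Matrix (Fin 3) (Fin 3) ℤ) = !![a, 2 * c, 0; c, a, 0; 0, 0, 1] := by
      conv_lhs => rw [Matrix.eta_fin_three (M : Matrix (Fin 3) (Fin 3) ℤ)]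
      rw [← ha_def, ← hb_def, ← hc_def, ← hd_def, h0, h1, h2, r0, r1, hb2c, hda']
    rcases lt_trichotomy a 0 with hneg | hzero | hpos
    · -- a < 0 : impossible mod 4
      exfalso
      obtain ⟨n, hn⟩ := pell_s16 (-c).natAbs (-a) (-c) rfl (by linarith)
        (by linear_combination e00')
      have hsB := mapS (Subgroup.zpow_mem H BGL_mem_H n)
      rw [hn] at hsB
      have hy02 : ((!![-a, 2 * -c, 0; -c, -a, 0; 0, 0, 1] : Matrix (Fin 3) (Fin 3) ℤ).map
          (Int.castRingHom (ZMod 4))) 0 2 = 0 := by simp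
      have hy12 : ((!![-a, 2 * -c, 0; -c, -a, 0; 0, 0, 1] : Matrix (Fin 3) (Fin 3) ℤ).map
          (Int.castRingHom (ZMod 4))) 1 2 = 0 := by simp
      have hy22 : ((!![-a, 2 * -c, 0; -c, -a, 0; 0, 0, 1] : Matrix (Fin 3) (Fin 3) ℤ).map
          (Int.castRingHom (ZMod 4))) 2 2 = 1 := by simp
      have hnarB := narrow _ hsB hy02 hy12 hy22
      have hA : ((!![-a, 2 * -c, 0; -c, -a, 0; 0, 0, 1] : Matrix (Fin 3) (Fin 3) ℤ).map
          (Int.castRingHom (ZMod 4))) 0 0 = -((a : ℤ) : ZMod 4) := by simp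
      have hC : ((!![-a, 2 * -c, 0; -c, -a, 0; 0, 0, 1] : Matrix (Fin 3) (Fin 3) ℤ).map
          (Int.castRingHom (ZMod 4))) 1 0 = -((c : ℤ) : ZMod 4) := by simp
      rw [hA, hC] at hnarB
      rcases hnar with ⟨hxa, hxc, -⟩ | ⟨hxa, hxc, -⟩ <;>
        rcases hnarB with ⟨hya, hyc, -⟩ | ⟨hya, hyc, -⟩ <;>
          rw [hxa] at hya <;> rw [hxc] at hyc <;>
        first
          | exact absurd hya (by decide)
          | exact absurd hyc (by decide)
    · exact absurd hzero (fun h' => ha0 h')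
    · obtain ⟨n, hn⟩ := pell_s16 c.natAbs a c rfl hpos (by linear_combination e00')
      exact ⟨n, Units.ext (hmat.trans hn.symm)⟩
  · -- d = -a : impossible mod 4
    exfalso
    have hda' : d = -a := by linarith
    rcases hnar with ⟨hxa, -, hxd⟩ | ⟨hxa, -, hxd⟩ <;>
      rw [hda', Int.cast_neg, hxa] at hxd <;> exact absurd hxd (by decide)

/-- If `M ∈ H` has entry `M₂₃ = 0`, then `M = I`, `M = J`, `M = Bⁿ`, or
`M = J Bⁿ` for some integer `n`. -/
theorem m23_zero (M : GL (Fin 3) ℤ) (hM : M ∈ H)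
    (h : (M : Matrix (Fin 3) (Fin 3) ℤ) 1 2 = 0) :
    M = 1 ∨ M = JGL ∨ (∃ n : ℤ, M = BGL ^ n) ∨ (∃ n : ℤ, M = JGL * BGL ^ n) := by
  have e22 := form_entries hM 2 2
  rw [h, show Qmat 2 2 = 1 from rfl] at e22
  set x := (M : Matrix (Fin 3) (Fin 3) ℤ) 0 2 with hx_def
  set z := (M : Matrix (Fin 3) (Fin 3) ℤ) 2 2 with hz_def
  have e22' : x * x + z * z = 1 := by linear_combination e22
  have hxb : -1 ≤ x ∧ x ≤ 1 := by constructor <;> nlinarith [sq_nonneg z, sq_nonneg (x-1), sq_nonneg (x+1)]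
  have hzb : -1 ≤ z ∧ z ≤ 1 := by constructor <;> nlinarith [sq_nonneg x, sq_nonneg (z-1), sq_nonneg (z+1)]
  have hxc : x = -1 ∨ x = 0 ∨ x = 1 := by omega
  have hzc : z = -1 ∨ z = 0 ∨ z = 1 := by omega
  -- mod 4 data
  have hs := mapS hM
  have x12 : ((M : Matrix (Fin 3) (Fin 3) ℤ).map (Int.castRingHom (ZMod 4))) 1 2 = 0 := by
    simp [Matrix.map_apply, h]
  have hcl := classify _ hs x12
  simp only [Matrix.map_apply, Int.coe_castRingHom, ← hx_def, ← hz_def] at hcl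
  rcases hxc with hx | hx | hx <;> rcases hzc with hz | hz | hz <;>
    rw [hx, hz] at e22' <;> try norm_num at e22'
  · -- x = -1, z = 0 : impossible mod 4
    exfalso
    rw [hx, hz] at hcl
    rcases hcl with ⟨h', -⟩ | ⟨h', -⟩ <;> exact absurd h' (by decide)
  · -- x = 0, z = -1 : impossible mod 4
    exfalso
    rw [hx, hz] at hcl
    rcases hcl with ⟨-, h'⟩ | ⟨-, h'⟩ <;> revert h' <;> decide
  · -- x = 0, z = 1 : M is a power of B
    obtain ⟨n, hn⟩ := third_col_e3 M hM (hx_def ▸ hx) h (hz_def ▸ hz)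
    exact Or.inr (Or.inr (Or.inl ⟨n, hn⟩))
  · -- x = 1, z = 0 : J * M is a power of B
    have hM' : JGL * M ∈ H := mul_mem JGL_mem_H hM
    have hx' : (M : Matrix (Fin 3) (Fin 3) ℤ) 0 2 = 1 := hx_def ▸ hx
    have hz' : (M : Matrix (Fin 3) (Fin 3) ℤ) 2 2 = 0 := hz_def ▸ hz
    have k0 : ((JGL * M : GL (Fin 3) ℤ) : Matrix (Fin 3) (Fin 3) ℤ) 0 2 = 0 := by
      show (Jmat * (M : Matrix (Fin 3) (Fin 3) ℤ)) 0 2 = 0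
      simp [Jmat, Matrix.mul_apply, Fin.sum_univ_three, hz']
    have k1 : ((JGL * M : GL (Fin 3) ℤ) : Matrix (Fin 3) (Fin 3) ℤ) 1 2 = 0 := by
      show (Jmat * (M : Matrix (Fin 3) (Fin 3) ℤ)) 1 2 = 0
      simp [Jmat, Matrix.mul_apply, Fin.sum_univ_three, h]
    have k2 : ((JGL * M : GL (Fin 3) ℤ) : Matrix (Fin 3) (Fin 3) ℤ) 2 2 = 1 := by
      show (Jmat * (M : Matrix (Fin 3) (Fin 3) ℤ)) 2 2 = 1
      simp [Jmat, Matrix.mul_apply, Fin.sum_univ_three, hx']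
    obtain ⟨n, hn⟩ := third_col_e3 (JGL * M) hM' k0 k1 k2
    have hJ2 : JGL * JGL = 1 := Units.ext (by decide)
    refine Or.inr (Or.inr (Or.inr ⟨n, ?_⟩))
    calc M = JGL * (JGL * M) := by rw [← mul_assoc, hJ2, one_mul]
    _ = JGL * BGL ^ n := by rw [hn]
end

section
/- Suppose every canonical Büchi sequence of length 5 is trivial. Then every Büchi sequence of length 8 is trivial. -/
/-- `x₁, …, x_N` is a Büchi sequence of length `N`. -/
def IsBuchi (N : ℕ) (x : ℕ → ℤ) : Prop :=
  ∀ n, 1 ≤ n → n + 2 ≤ N → x (n + 2) ^ 2 - 2 * x (n + 1) ^ 2 + x n ^ 2 = 2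

/-- `x₁, …, x_N` is trivial: `x_n² = (ν + n)²` for all `n`. -/
def IsTrivialSeq (N : ℕ) (x : ℕ → ℤ) : Prop :=
  ∃ ν : ℤ, ∀ n, 1 ≤ n → n ≤ N → x n ^ 2 = (ν + n) ^ 2

/-- A length-5 integer sequence `x₁, …, x₅` is canonical. -/
def IsCanonical (x : ℕ → ℤ) : Prop :=
  x 1 ≡ 2 [ZMOD 8] ∧ x 5 ≡ 2 [ZMOD 8] ∧
  (((x 4 ≡ 1 [ZMOD 8] ∨ x 4 ≡ -3 [ZMOD 8]) ∧
    (x 2 ≡ -1 [ZMOD 8] ∨ x 2 ≡ 3 [ZMOD 8])) ∨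
   ((x 4 ≡ -1 [ZMOD 8] ∨ x 4 ≡ 3 [ZMOD 8]) ∧
    (x 2 ≡ 1 [ZMOD 8] ∨ x 2 ≡ -3 [ZMOD 8])))

lemma sqAll : ∀ u : ZMod 16, u^2 = 0 ∨ u^2 = 1 ∨ u^2 = 4 ∨ u^2 = 9 := by decide

lemma mod8_of_sq4 (t : ℤ) (h : ((t : ZMod 16))^2 = 4) : (t : ZMod 8) = 2 ∨ (t : ZMod 8) = 6 := by
  have key : ∀ u : ZMod 16, u^2 = 4 →
      (ZMod.castHom (by norm_num : (8:ℕ) ∣ 16) (ZMod 8) u = 2 ∨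
       ZMod.castHom (by norm_num : (8:ℕ) ∣ 16) (ZMod 8) u = 6) := by decide
  have h2 := key _ h
  rwa [map_intCast] at h2

lemma mod8_of_sqOdd (t : ℤ) (h : ((t : ZMod 16))^2 = 1 ∨ ((t : ZMod 16))^2 = 9) :
    (t : ZMod 8) = 1 ∨ (t : ZMod 8) = 3 ∨ (t : ZMod 8) = 5 ∨ (t : ZMod 8) = 7 := by
  have key : ∀ u : ZMod 16, u^2 = 1 ∨ u^2 = 9 →
      (ZMod.castHom (by norm_num : (8:ℕ) ∣ 16) (ZMod 8) u = 1 ∨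
       ZMod.castHom (by norm_num : (8:ℕ) ∣ 16) (ZMod 8) u = 3 ∨
       ZMod.castHom (by norm_num : (8:ℕ) ∣ 16) (ZMod 8) u = 5 ∨
       ZMod.castHom (by norm_num : (8:ℕ) ∣ 16) (ZMod 8) u = 7) := by decide
  have h2 := key _ h
  rwa [map_intCast] at h2

lemma sign2 (t : ℤ) (h : ((t : ZMod 16))^2 = 4) : ∃ ε : ℤ, ε^2 = 1 ∧ ε * t ≡ 2 [ZMOD 8] := by
  rcases mod8_of_sq4 t h with h8 | h8
  · exact ⟨1, by norm_num, (ZMod.intCast_eq_intCast_iff _ _ _).mp (by push_cast [h8]; decide)⟩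
  · exact ⟨-1, by norm_num, (ZMod.intCast_eq_intCast_iff _ _ _).mp (by push_cast [h8]; decide)⟩

lemma signA (t : ℤ) (h : ((t : ZMod 16))^2 = 1 ∨ ((t : ZMod 16))^2 = 9) :
    ∃ ε : ℤ, ε^2 = 1 ∧ (ε * t ≡ 1 [ZMOD 8] ∨ ε * t ≡ -3 [ZMOD 8]) := by
  rcases mod8_of_sqOdd t h with h8 | h8 | h8 | h8
  · exact ⟨1, by norm_num, Or.inl <| (ZMod.intCast_eq_intCast_iff _ _ _).mp (by push_cast [h8]; decide)⟩
  · exact ⟨-1, by norm_num, Or.inr <| (ZMod.intCast_eq_intCast_iff _ _ _).mp (by push_cast [h8]; decide)⟩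
  · exact ⟨1, by norm_num, Or.inr <| (ZMod.intCast_eq_intCast_iff _ _ _).mp (by push_cast [h8]; decide)⟩
  · exact ⟨-1, by norm_num, Or.inl <| (ZMod.intCast_eq_intCast_iff _ _ _).mp (by push_cast [h8]; decide)⟩

lemma signB (t : ℤ) (h : ((t : ZMod 16))^2 = 1 ∨ ((t : ZMod 16))^2 = 9) :
    ∃ ε : ℤ, ε^2 = 1 ∧ (ε * t ≡ -1 [ZMOD 8] ∨ ε * t ≡ 3 [ZMOD 8]) := by
  rcases mod8_of_sqOdd t h with h8 | h8 | h8 | h8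
  · exact ⟨-1, by norm_num, Or.inl <| (ZMod.intCast_eq_intCast_iff _ _ _).mp (by push_cast [h8]; decide)⟩
  · exact ⟨1, by norm_num, Or.inr <| (ZMod.intCast_eq_intCast_iff _ _ _).mp (by push_cast [h8]; decide)⟩
  · exact ⟨-1, by norm_num, Or.inr <| (ZMod.intCast_eq_intCast_iff _ _ _).mp (by push_cast [h8]; decide)⟩
  · exact ⟨1, by norm_num, Or.inl <| (ZMod.intCast_eq_intCast_iff _ _ _).mp (by push_cast [h8]; decide)⟩

set_option synthInstance.maxSize 4000 in
set_option synthInstance.maxHeartbeats 1000000 in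
set_option maxHeartbeats 2000000 in
lemma key16 : ∀ c d : ZMod 16,
    (1 + c*1 + d = 0 ∨ 1 + c*1 + d = 1 ∨ 1 + c*1 + d = 4 ∨ 1 + c*1 + d = 9) →
    (4 + c*2 + d = 0 ∨ 4 + c*2 + d = 1 ∨ 4 + c*2 + d = 4 ∨ 4 + c*2 + d = 9) →
    (9 + c*3 + d = 0 ∨ 9 + c*3 + d = 1 ∨ 9 + c*3 + d = 4 ∨ 9 + c*3 + d = 9) →
    (16 + c*4 + d = 0 ∨ 16 + c*4 + d = 1 ∨ 16 + c*4 + d = 4 ∨ 16 + c*4 + d = 9) →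
    (25 + c*5 + d = 0 ∨ 25 + c*5 + d = 1 ∨ 25 + c*5 + d = 4 ∨ 25 + c*5 + d = 9) →
    (36 + c*6 + d = 0 ∨ 36 + c*6 + d = 1 ∨ 36 + c*6 + d = 4 ∨ 36 + c*6 + d = 9) →
    (49 + c*7 + d = 0 ∨ 49 + c*7 + d = 1 ∨ 49 + c*7 + d = 4 ∨ 49 + c*7 + d = 9) →
    (64 + c*8 + d = 0 ∨ 64 + c*8 + d = 1 ∨ 64 + c*8 + d = 4 ∨ 64 + c*8 + d = 9) →
    (1 + c*1 + d = 4 ∧ 25 + c*5 + d = 4 ∧ (4 + c*2 + d = 1 ∨ 4 + c*2 + d = 9) ∧ (16 + c*4 + d = 1 ∨ 16 + c*4 + d = 9)) ∨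
    (4 + c*2 + d = 4 ∧ 36 + c*6 + d = 4 ∧ (9 + c*3 + d = 1 ∨ 9 + c*3 + d = 9) ∧ (25 + c*5 + d = 1 ∨ 25 + c*5 + d = 9)) ∨
    (9 + c*3 + d = 4 ∧ 49 + c*7 + d = 4 ∧ (16 + c*4 + d = 1 ∨ 16 + c*4 + d = 9) ∧ (36 + c*6 + d = 1 ∨ 36 + c*6 + d = 9)) ∨
    (16 + c*4 + d = 4 ∧ 64 + c*8 + d = 4 ∧ (25 + c*5 + d = 1 ∨ 25 + c*5 + d = 9) ∧ (49 + c*7 + d = 1 ∨ 49 + c*7 + d = 9)) := by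
  decide

lemma windowTriv (hcan : ∀ x : ℕ → ℤ, IsBuchi 5 x → IsCanonical x → IsTrivialSeq 5 x)
    (y : ℕ → ℤ) (hB : IsBuchi 8 y) (k : ℕ) (hk : k ≤ 3)
    (h1 : ((y (k+1) : ZMod 16))^2 = 4)
    (h2 : ((y (k+2) : ZMod 16))^2 = 1 ∨ ((y (k+2) : ZMod 16))^2 = 9)
    (h4 : ((y (k+4) : ZMod 16))^2 = 1 ∨ ((y (k+4) : ZMod 16))^2 = 9)
    (h5 : ((y (k+5) : ZMod 16))^2 = 4) :
    ∃ ν : ℤ, ∀ n : ℕ, 1 ≤ n → n ≤ 5 → (y (k+n))^2 = (ν + n)^2 := by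
  obtain ⟨e1, he1, hm1⟩ := sign2 _ h1
  obtain ⟨e2, he2, hm2⟩ := signB _ h2
  obtain ⟨e4, he4, hm4⟩ := signA _ h4
  obtain ⟨e5, he5, hm5⟩ := sign2 _ h5
  set x : ℕ → ℤ := fun n => if n = 1 then e1 * y (k+1) else if n = 2 then e2 * y (k+2)
    else if n = 4 then e4 * y (k+4) else if n = 5 then e5 * y (k+5) else y (k+n) with hx
  have hxsq : ∀ n, 1 ≤ n → n ≤ 5 → (x n)^2 = (y (k+n))^2 := by
    intro n hn1 hn5
    interval_cases n <;> simp only [hx] <;> norm_num <;> nlinarith [he1, he2, he4, he5]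
  have hBx : IsBuchi 5 x := by
    intro n hn1 hn2
    have hb := hB (k+n) (by omega) (by omega)
    have q1 : (x n)^2 = (y (k+n))^2 := hxsq n hn1 (by omega)
    have q2 : (x (n+1))^2 = (y (k+n+1))^2 := hxsq (n+1) (by omega) (by omega)
    have q3 : (x (n+2))^2 = (y (k+n+2))^2 := hxsq (n+2) (by omega) (by omega)
    linarith
  have hCx : IsCanonical x := ⟨hm1, hm5, Or.inl ⟨hm4, hm2⟩⟩
  obtain ⟨ν, hν⟩ := hcan x hBx hCx
  exact ⟨ν, fun n hn1 hn5 => by rw [← hxsq n hn1 hn5]; exact hν n hn1 hn5⟩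

/-- If every canonical Büchi sequence of length 5 is trivial, then every Büchi
sequence of length 8 is trivial. -/
theorem canonical_implies_length8
    (hcan : ∀ x : ℕ → ℤ, IsBuchi 5 x → IsCanonical x → IsTrivialSeq 5 x) :
    ∀ y : ℕ → ℤ, IsBuchi 8 y → IsTrivialSeq 8 y := by
  intro y hB
  obtain ⟨c, d, s1, s2⟩ : ∃ c d : ℤ, y 1 ^ 2 = 1 + c*1 + d ∧ y 2 ^ 2 = 4 + c*2 + d :=
    ⟨y 2^2 - y 1^2 - 3, 2*y 1^2 - y 2^2 + 2, by ring, by ring⟩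
  have s3 : y 3 ^ 2 = 9 + c*3 + d := by
    have h := hB 1 (by norm_num) (by norm_num); norm_num at h; linarith
  have s4 : y 4 ^ 2 = 16 + c*4 + d := by
    have h := hB 2 (by norm_num) (by norm_num); norm_num at h; linarith
  have s5 : y 5 ^ 2 = 25 + c*5 + d := by
    have h := hB 3 (by norm_num) (by norm_num); norm_num at h; linarith
  have s6 : y 6 ^ 2 = 36 + c*6 + d := by
    have h := hB 4 (by norm_num) (by norm_num); norm_num at h; linarith
  have s7 : y 7 ^ 2 = 49 + c*7 + d := by
    have h := hB 5 (by norm_num) (by norm_num); norm_num at h; linarith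
  have s8 : y 8 ^ 2 = 64 + c*8 + d := by
    have h := hB 6 (by norm_num) (by norm_num); norm_num at h; linarith
  have cast1 : ((y 1 : ZMod 16))^2 = 1 + (c : ZMod 16)*1 + (d : ZMod 16) := by
    have h : ((y 1^2 : ℤ) : ZMod 16) = ((1 + c*1 + d : ℤ) : ZMod 16) := by rw [s1]
    push_cast at h
    linear_combination h
  have cast2 : ((y 2 : ZMod 16))^2 = 4 + (c : ZMod 16)*2 + (d : ZMod 16) := by
    have h : ((y 2^2 : ℤ) : ZMod 16) = ((4 + c*2 + d : ℤ) : ZMod 16) := by rw [s2]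
    push_cast at h
    linear_combination h
  have cast3 : ((y 3 : ZMod 16))^2 = 9 + (c : ZMod 16)*3 + (d : ZMod 16) := by
    have h : ((y 3^2 : ℤ) : ZMod 16) = ((9 + c*3 + d : ℤ) : ZMod 16) := by rw [s3]
    push_cast at h
    linear_combination h
  have cast4 : ((y 4 : ZMod 16))^2 = 16 + (c : ZMod 16)*4 + (d : ZMod 16) := by
    have h : ((y 4^2 : ℤ) : ZMod 16) = ((16 + c*4 + d : ℤ) : ZMod 16) := by rw [s4]
    push_cast at h
    linear_combination h
  have cast5 : ((y 5 : ZMod 16))^2 = 25 + (c : ZMod 16)*5 + (d : ZMod 16) := by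
    have h : ((y 5^2 : ℤ) : ZMod 16) = ((25 + c*5 + d : ℤ) : ZMod 16) := by rw [s5]
    push_cast at h
    linear_combination h
  have cast6 : ((y 6 : ZMod 16))^2 = 36 + (c : ZMod 16)*6 + (d : ZMod 16) := by
    have h : ((y 6^2 : ℤ) : ZMod 16) = ((36 + c*6 + d : ℤ) : ZMod 16) := by rw [s6]
    push_cast at h
    linear_combination h
  have cast7 : ((y 7 : ZMod 16))^2 = 49 + (c : ZMod 16)*7 + (d : ZMod 16) := by
    have h : ((y 7^2 : ℤ) : ZMod 16) = ((49 + c*7 + d : ℤ) : ZMod 16) := by rw [s7]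
    push_cast at h
    linear_combination h
  have cast8 : ((y 8 : ZMod 16))^2 = 64 + (c : ZMod 16)*8 + (d : ZMod 16) := by
    have h : ((y 8^2 : ℤ) : ZMod 16) = ((64 + c*8 + d : ℤ) : ZMod 16) := by rw [s8]
    push_cast at h
    linear_combination h
  have q1 : (1 + (c : ZMod 16)*1 + (d : ZMod 16) = 0 ∨ 1 + (c : ZMod 16)*1 + (d : ZMod 16) = 1 ∨ 1 + (c : ZMod 16)*1 + (d : ZMod 16) = 4 ∨ 1 + (c : ZMod 16)*1 + (d : ZMod 16) = 9) := by
    rw [← cast1]; exact sqAll _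
  have q2 : (4 + (c : ZMod 16)*2 + (d : ZMod 16) = 0 ∨ 4 + (c : ZMod 16)*2 + (d : ZMod 16) = 1 ∨ 4 + (c : ZMod 16)*2 + (d : ZMod 16) = 4 ∨ 4 + (c : ZMod 16)*2 + (d : ZMod 16) = 9) := by
    rw [← cast2]; exact sqAll _
  have q3 : (9 + (c : ZMod 16)*3 + (d : ZMod 16) = 0 ∨ 9 + (c : ZMod 16)*3 + (d : ZMod 16) = 1 ∨ 9 + (c : ZMod 16)*3 + (d : ZMod 16) = 4 ∨ 9 + (c : ZMod 16)*3 + (d : ZMod 16) = 9) := by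
    rw [← cast3]; exact sqAll _
  have q4 : (16 + (c : ZMod 16)*4 + (d : ZMod 16) = 0 ∨ 16 + (c : ZMod 16)*4 + (d : ZMod 16) = 1 ∨ 16 + (c : ZMod 16)*4 + (d : ZMod 16) = 4 ∨ 16 + (c : ZMod 16)*4 + (d : ZMod 16) = 9) := by
    rw [← cast4]; exact sqAll _
  have q5 : (25 + (c : ZMod 16)*5 + (d : ZMod 16) = 0 ∨ 25 + (c : ZMod 16)*5 + (d : ZMod 16) = 1 ∨ 25 + (c : ZMod 16)*5 + (d : ZMod 16) = 4 ∨ 25 + (c : ZMod 16)*5 + (d : ZMod 16) = 9) := by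
    rw [← cast5]; exact sqAll _
  have q6 : (36 + (c : ZMod 16)*6 + (d : ZMod 16) = 0 ∨ 36 + (c : ZMod 16)*6 + (d : ZMod 16) = 1 ∨ 36 + (c : ZMod 16)*6 + (d : ZMod 16) = 4 ∨ 36 + (c : ZMod 16)*6 + (d : ZMod 16) = 9) := by
    rw [← cast6]; exact sqAll _
  have q7 : (49 + (c : ZMod 16)*7 + (d : ZMod 16) = 0 ∨ 49 + (c : ZMod 16)*7 + (d : ZMod 16) = 1 ∨ 49 + (c : ZMod 16)*7 + (d : ZMod 16) = 4 ∨ 49 + (c : ZMod 16)*7 + (d : ZMod 16) = 9) := by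
    rw [← cast7]; exact sqAll _
  have q8 : (64 + (c : ZMod 16)*8 + (d : ZMod 16) = 0 ∨ 64 + (c : ZMod 16)*8 + (d : ZMod 16) = 1 ∨ 64 + (c : ZMod 16)*8 + (d : ZMod 16) = 4 ∨ 64 + (c : ZMod 16)*8 + (d : ZMod 16) = 9) := by
    rw [← cast8]; exact sqAll _
  have K := key16 (c : ZMod 16) (d : ZMod 16) q1 q2 q3 q4 q5 q6 q7 q8
  rcases K with W | W | W | W
  · obtain ⟨ν, hw⟩ := windowTriv hcan y hB 0 (by norm_num)
      (cast1.trans W.1) (W.2.2.1.imp cast2.trans cast2.trans)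
      (W.2.2.2.imp cast4.trans cast4.trans) (cast5.trans W.2.1)
    have w1 := hw 1 (by norm_num) (by norm_num)
    have w2 := hw 2 (by norm_num) (by norm_num)
    norm_num at w1 w2
    have hc2 : c = 2*(ν - 0) := by linear_combination w2 - w1 + s1 - s2
    have hd2 : d = (ν - 0)^2 := by linear_combination w1 - s1 - 1*hc2
    refine ⟨ν - 0, ?_⟩
    intro n hn1 hn8
    interval_cases n
    all_goals push_cast
    · linear_combination s1 + 1*hc2 + hd2
    · linear_combination s2 + 2*hc2 + hd2
    · linear_combination s3 + 3*hc2 + hd2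
    · linear_combination s4 + 4*hc2 + hd2
    · linear_combination s5 + 5*hc2 + hd2
    · linear_combination s6 + 6*hc2 + hd2
    · linear_combination s7 + 7*hc2 + hd2
    · linear_combination s8 + 8*hc2 + hd2
  · obtain ⟨ν, hw⟩ := windowTriv hcan y hB 1 (by norm_num)
      (cast2.trans W.1) (W.2.2.1.imp cast3.trans cast3.trans)
      (W.2.2.2.imp cast5.trans cast5.trans) (cast6.trans W.2.1)
    have w1 := hw 1 (by norm_num) (by norm_num)
    have w2 := hw 2 (by norm_num) (by norm_num)
    norm_num at w1 w2
    have hc2 : c = 2*(ν - 1) := by linear_combination w2 - w1 + s2 - s3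
    have hd2 : d = (ν - 1)^2 := by linear_combination w1 - s2 - 2*hc2
    refine ⟨ν - 1, ?_⟩
    intro n hn1 hn8
    interval_cases n
    all_goals push_cast
    · linear_combination s1 + 1*hc2 + hd2
    · linear_combination s2 + 2*hc2 + hd2
    · linear_combination s3 + 3*hc2 + hd2
    · linear_combination s4 + 4*hc2 + hd2
    · linear_combination s5 + 5*hc2 + hd2
    · linear_combination s6 + 6*hc2 + hd2
    · linear_combination s7 + 7*hc2 + hd2
    · linear_combination s8 + 8*hc2 + hd2
  · obtain ⟨ν, hw⟩ := windowTriv hcan y hB 2 (by norm_num)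
      (cast3.trans W.1) (W.2.2.1.imp cast4.trans cast4.trans)
      (W.2.2.2.imp cast6.trans cast6.trans) (cast7.trans W.2.1)
    have w1 := hw 1 (by norm_num) (by norm_num)
    have w2 := hw 2 (by norm_num) (by norm_num)
    norm_num at w1 w2
    have hc2 : c = 2*(ν - 2) := by linear_combination w2 - w1 + s3 - s4
    have hd2 : d = (ν - 2)^2 := by linear_combination w1 - s3 - 3*hc2
    refine ⟨ν - 2, ?_⟩
    intro n hn1 hn8
    interval_cases n
    all_goals push_cast
    · linear_combination s1 + 1*hc2 + hd2
    · linear_combination s2 + 2*hc2 + hd2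
    · linear_combination s3 + 3*hc2 + hd2
    · linear_combination s4 + 4*hc2 + hd2
    · linear_combination s5 + 5*hc2 + hd2
    · linear_combination s6 + 6*hc2 + hd2
    · linear_combination s7 + 7*hc2 + hd2
    · linear_combination s8 + 8*hc2 + hd2
  · obtain ⟨ν, hw⟩ := windowTriv hcan y hB 3 (by norm_num)
      (cast4.trans W.1) (W.2.2.1.imp cast5.trans cast5.trans)
      (W.2.2.2.imp cast7.trans cast7.trans) (cast8.trans W.2.1)
    have w1 := hw 1 (by norm_num) (by norm_num)
    have w2 := hw 2 (by norm_num) (by norm_num)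
    norm_num at w1 w2
    have hc2 : c = 2*(ν - 3) := by linear_combination w2 - w1 + s4 - s5
    have hd2 : d = (ν - 3)^2 := by linear_combination w1 - s4 - 4*hc2
    refine ⟨ν - 3, ?_⟩
    intro n hn1 hn8
    interval_cases n
    all_goals push_cast
    · linear_combination s1 + 1*hc2 + hd2
    · linear_combination s2 + 2*hc2 + hd2
    · linear_combination s3 + 3*hc2 + hd2
    · linear_combination s4 + 4*hc2 + hd2
    · linear_combination s5 + 5*hc2 + hd2
    · linear_combination s6 + 6*hc2 + hd2
    · linear_combination s7 + 7*hc2 + hd2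
    · linear_combination s8 + 8*hc2 + hd2
end
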